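/- arXiv:2602.03440 — 12 statements merged into one kernel-verified Lean document; each statement's English description precedes it below -/
import Mathlib

section
/- For integers n and j with n ≥ 1 and 0 ≤ j < n, we have ∑_{k=j}^{n} (-1)^{k-j} · {n k} · [k j] · H_k = (C(n,j) - 1) · B_{n-j}/(n-j), where C(n,j) is the binomial coefficient. -/
/-- Stirling numbers of the second kind. -/
def stirling2 : ℕ → ℕ → ℕ
  | 0, 0 => 1
  | 0, _ + 1 => 0
  | _ + 1, 0 => 0
  | n + 1, k + 1 => (k + 1) * stirling2 n (k + 1) + stirling2 n k

/-- Unsigned Stirling numbers of the first kind. -/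
def stirling1 : ℕ → ℕ → ℕ
  | 0, 0 => 1
  | 0, _ + 1 => 0
  | _ + 1, 0 => 0
  | n + 1, k + 1 => n * stirling1 n (k + 1) + stirling1 n k

section Helpers

open Polynomial Finset

lemma s1zz : stirling1 0 0 = 1 := rfl
lemma s1z (k : ℕ) : stirling1 0 (k+1) = 0 := rfl
lemma s1sz (n : ℕ) : stirling1 (n+1) 0 = 0 := rfl
lemma s1rec (n k : ℕ) : stirling1 (n+1) (k+1) = n * stirling1 n (k+1) + stirling1 n k := rfl
lemma s2zz : stirling2 0 0 = 1 := rfl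
lemma s2z (k : ℕ) : stirling2 0 (k+1) = 0 := rfl
lemma s2sz (n : ℕ) : stirling2 (n+1) 0 = 0 := rfl
lemma s2rec (n k : ℕ) : stirling2 (n+1) (k+1) = (k+1) * stirling2 n (k+1) + stirling2 n k := rfl

lemma stirling1_eq_zero {k j : ℕ} (h : k < j) : stirling1 k j = 0 := by
  induction k generalizing j with
  | zero => cases j with
    | zero => omega
    | succ j => rfl
  | succ k ih =>
    cases j with
    | zero => omega
    | succ j =>
      show k * stirling1 k (j+1) + stirling1 k j = 0
      rw [ih (by omega), ih (by omega)]
      simp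

lemma stirling2_eq_zero {n k : ℕ} (h : n < k) : stirling2 n k = 0 := by
  induction n generalizing k with
  | zero => cases k with
    | zero => omega
    | succ k => rfl
  | succ n ih =>
    cases k with
    | zero => omega
    | succ k =>
      show (k+1) * stirling2 n (k+1) + stirling2 n k = 0
      rw [ih (by omega), ih (by omega)]
      simp

lemma dp_coeff (k j : ℕ) :
    (descPochhammer ℚ k).coeff j = (-1 : ℚ)^(k-j) * stirling1 k j := by
  induction k generalizing j with
  | zero =>
    cases j with
    | zero => simp [descPochhammer, s1zz]
    | succ j => simp [descPochhammer, s1z, coeff_one]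
  | succ k ih =>
    rw [descPochhammer_succ_right, ← C_eq_natCast]
    cases j with
    | zero =>
      simp only [mul_coeff_zero, coeff_sub, coeff_X_zero, coeff_C, if_pos rfl, zero_sub,
        ih 0, s1sz, Nat.cast_zero, mul_zero, Nat.sub_zero]
      cases k with
      | zero => simp
      | succ m => rw [s1sz m]; simp
    | succ j =>
      rw [Polynomial.coeff_mul_X_sub_C, ih j, ih (j+1), s1rec, Nat.succ_sub_succ]
      rcases le_or_gt (j+1) k with h | h
      · have h1 : k - j = (k - (j+1)) + 1 := by omega
        rw [h1]; push_cast; ring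
      · rw [stirling1_eq_zero h]; push_cast; ring

lemma X_mul_dp (k : ℕ) : (X : ℚ[X]) * descPochhammer ℚ k
    = descPochhammer ℚ (k+1) + C (k : ℚ) * descPochhammer ℚ k := by
  rw [descPochhammer_succ_right, ← C_eq_natCast]
  ring

lemma dp_expand (n : ℕ) : (X : ℚ[X])^n
    = ∑ k ∈ range (n+1), C (stirling2 n k : ℚ) * descPochhammer ℚ k := by
  induction n with
  | zero => simp [s2zz]
  | succ n ih =>
    rw [pow_succ, ih, mul_comm, Finset.mul_sum]
    have h1 : ∀ k, (X : ℚ[X]) * (C (stirling2 n k : ℚ) * descPochhammer ℚ k)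
        = C (stirling2 n k : ℚ) * descPochhammer ℚ (k+1)
          + C ((k * stirling2 n k : ℕ) : ℚ) * descPochhammer ℚ k := by
      intro k
      rw [show (X : ℚ[X]) * (C (stirling2 n k : ℚ) * descPochhammer ℚ k)
          = C (stirling2 n k : ℚ) * ((X : ℚ[X]) * descPochhammer ℚ k) by ring, X_mul_dp]
      push_cast
      simp only [C_add, C_mul]
      ring
    simp_rw [h1, Finset.sum_add_distrib]
    rw [Finset.sum_range_succ' (fun k => C (stirling2 (n+1) k : ℚ) * descPochhammer ℚ k)]
    rw [s2sz]
    have h2 : ∀ i, C (stirling2 (n+1) (i+1) : ℚ) * descPochhammer ℚ (i+1)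
        = C (stirling2 n i : ℚ) * descPochhammer ℚ (i+1)
          + C (((i+1) * stirling2 n (i+1) : ℕ) : ℚ) * descPochhammer ℚ (i+1) := by
      intro i
      rw [s2rec]
      push_cast
      simp only [C_add, C_mul]
      ring
    simp_rw [h2, Finset.sum_add_distrib]
    simp only [Nat.cast_zero, map_zero, zero_mul, add_zero]
    congr 1
    rw [Finset.sum_range_succ' (fun k => C ((k * stirling2 n k : ℕ) : ℚ) * descPochhammer ℚ k)]
    rw [add_comm]
    simp only [Nat.zero_eq, Nat.cast_zero, zero_mul, Nat.cast_ofNat, map_zero, add_zero]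
    rw [Finset.sum_range_succ (fun i => C (((i+1) * stirling2 n (i+1) : ℕ) : ℚ) * descPochhammer ℚ (i+1))]
    rw [stirling2_eq_zero (Nat.lt_succ_self n)]
    simp

lemma dp_succ_eval_succ (k : ℕ) (N : ℚ) :
    (descPochhammer ℚ (k+1)).eval (N+1) = (N+1) * (descPochhammer ℚ k).eval N := by
  rw [descPochhammer_succ_left, eval_mul, eval_X, eval_comp, eval_sub, eval_X, eval_one]
  ring_nf

lemma faulhaber_eval (n N : ℕ) :
    ∑ k ∈ range (n+1), (stirling2 n k : ℚ)/(k+1) * (descPochhammer ℚ (k+1)).eval (N:ℚ)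
      = ∑ t ∈ range N, (t : ℚ)^n := by
  induction N with
  | zero => simp
  | succ N ih =>
    rw [Finset.sum_range_succ (fun t => (t:ℚ)^n), ← ih]
    have key : ∀ k, (stirling2 n k : ℚ)/(k+1) * (descPochhammer ℚ (k+1)).eval ((N+1 : ℕ):ℚ)
        = (stirling2 n k : ℚ)/(k+1) * (descPochhammer ℚ (k+1)).eval (N:ℚ)
          + (stirling2 n k : ℚ) * (descPochhammer ℚ k).eval (N:ℚ) := by
      intro k
      have h1 : ((N+1 : ℕ):ℚ) = (N:ℚ)+1 := by push_cast; ring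
      rw [h1, dp_succ_eval_succ, descPochhammer_succ_eval]
      have h2 : ((k:ℚ)+1) ≠ 0 := by positivity
      field_simp
      ring
    simp_rw [key, Finset.sum_add_distrib]
    congr 1
    have := congrArg (Polynomial.eval (N:ℚ)) (dp_expand n)
    rw [eval_pow, eval_X, eval_finset_sum] at this
    simp only [eval_mul, eval_C] at this
    exact this.symm

lemma faulhaber_poly (n : ℕ) :
    ∑ k ∈ range (n+1), C ((stirling2 n k : ℚ)/((k:ℚ)+1)) * descPochhammer ℚ (k+1)
      = C (((n:ℚ)+1)⁻¹) * (Polynomial.bernoulli (n+1) - C (_root_.bernoulli (n+1))) := by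
  apply eq_of_infinite_eval_eq
  apply Set.Infinite.mono (s := Set.range ((↑) : ℕ → ℚ))
  · rintro x ⟨N, rfl⟩
    show _ = _
    rw [eval_finset_sum]
    have lhs : ∑ k ∈ range (n+1),
        (C ((stirling2 n k : ℚ)/((k:ℚ)+1)) * descPochhammer ℚ (k+1)).eval (N:ℚ)
        = ∑ t ∈ range N, (t : ℚ)^n := by
      rw [← faulhaber_eval n N]
      exact Finset.sum_congr rfl fun k _ => by rw [eval_mul, eval_C]
    rw [lhs, eval_mul, eval_C, eval_sub, eval_C]
    rw [Polynomial.bernoulli_succ_eval]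
    have : ((n:ℚ)+1) ≠ 0 := by positivity
    field_simp
    ring
  · exact Set.infinite_range_of_injective Nat.cast_injective

noncomputable def Pharm (n : ℕ) : ℚ[X] :=
  ∑ k ∈ range (n+1), C ((stirling2 n k : ℚ) * harmonic k) * descPochhammer ℚ k

lemma Pharm_succ (n : ℕ) : Pharm (n+1) = X * Pharm n
    + C (((n:ℚ)+1)⁻¹) * (Polynomial.bernoulli (n+1) - C (_root_.bernoulli (n+1))) := by
  rw [← faulhaber_poly]
  unfold Pharm
  rw [Finset.sum_range_succ' (fun k => C ((stirling2 (n+1) k : ℚ) * harmonic k) * descPochhammer ℚ k)]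
  rw [s2sz]
  simp only [Nat.cast_zero, zero_mul, map_zero, add_zero]
  have key : ∀ i, C ((stirling2 (n+1) (i+1) : ℚ) * harmonic (i+1)) * descPochhammer ℚ (i+1)
      = C ((((i+1:ℕ)):ℚ) * (stirling2 n (i+1) : ℚ) * harmonic (i+1)) * descPochhammer ℚ (i+1)
        + C ((stirling2 n i : ℚ) * harmonic i) * (descPochhammer ℚ i * (X - C (i:ℚ)))
        + C ((stirling2 n i : ℚ)/((i:ℚ)+1)) * descPochhammer ℚ (i+1) := by
    intro i
    have hi : ((i:ℚ)+1) ≠ 0 := by positivity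
    have hC : C ((stirling2 (n+1) (i+1) : ℚ) * harmonic (i+1))
        = C ((((i+1:ℕ)):ℚ) * (stirling2 n (i+1) : ℚ) * harmonic (i+1))
          + C ((stirling2 n i : ℚ) * harmonic i)
          + C ((stirling2 n i : ℚ)/((i:ℚ)+1)) := by
      rw [← C_add, ← C_add]
      congr 1
      rw [s2rec, harmonic_succ]
      push_cast
      field_simp
      ring
    rw [descPochhammer_succ_right, ← C_eq_natCast, hC]
    ring
  simp_rw [key, Finset.sum_add_distrib]
  congr 1
  have shift : ∑ i ∈ range (n+1),
      C ((((i+1:ℕ)):ℚ) * (stirling2 n (i+1) : ℚ) * harmonic (i+1)) * descPochhammer ℚ (i+1)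
      = ∑ k ∈ range (n+1), C (((k:ℕ):ℚ) * (stirling2 n k : ℚ) * harmonic k) * descPochhammer ℚ k := by
    rw [eq_comm]
    rw [Finset.sum_range_succ' (fun k => C (((k:ℕ):ℚ) * (stirling2 n k : ℚ) * harmonic k) * descPochhammer ℚ k)]
    simp only [Nat.cast_zero, zero_mul, map_zero, add_zero]
    rw [Finset.sum_range_succ (fun i => C ((((i+1:ℕ)):ℚ) * (stirling2 n (i+1) : ℚ) * harmonic (i+1)) * descPochhammer ℚ (i+1))]
    rw [stirling2_eq_zero (Nat.lt_succ_self n)]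
    simp
  rw [shift, mul_comm X, Finset.sum_mul, ← Finset.sum_add_distrib]
  apply Finset.sum_congr rfl
  intro k _
  simp only [C_mul]
  ring

lemma Pharm_zero : Pharm 0 = 0 := by
  unfold Pharm
  simp [harmonic]

lemma Pharm_eq (n : ℕ) : Pharm n
    = ∑ m ∈ Icc 1 n, C ((m:ℚ)⁻¹) * X^(n-m) * (Polynomial.bernoulli m - C (_root_.bernoulli m)) := by
  induction n with
  | zero => simpa using Pharm_zero
  | succ n ih =>
    rw [Pharm_succ, ih, Finset.sum_Icc_succ_top (Nat.le_add_left 1 n), Finset.mul_sum]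
    rw [Nat.sub_self, pow_zero]
    congr 1
    · apply Finset.sum_congr rfl
      intro m hm
      have : n + 1 - m = (n - m) + 1 := by
        rw [Finset.mem_Icc] at hm; omega
      rw [this, pow_succ]
      ring
    · push_cast
      ring

lemma bernoulli_coeff (m t : ℕ) (h : t ≤ m) :
    (Polynomial.bernoulli m).coeff t = _root_.bernoulli (m - t) * (m.choose t : ℚ) := by
  rw [Polynomial.bernoulli_def, finset_sum_coeff]
  rw [Finset.sum_eq_single t]
  · rw [coeff_monomial, if_pos rfl]
  · intro i _ hi
    rw [coeff_monomial, if_neg hi]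
  · intro ht
    exact absurd (Finset.mem_range.2 (Nat.lt_succ_of_le h)) ht

lemma choose_div_sum (d : ℕ) (hd : 1 ≤ d) :
    ∀ n, d ≤ n → ∑ m ∈ Icc d n, (m.choose d : ℚ)/m = (n.choose d : ℚ)/d := by
  obtain ⟨e, rfl⟩ : ∃ e, d = e + 1 := ⟨d-1, by omega⟩
  intro n
  induction n with
  | zero => intro h; exact absurd h (by omega)
  | succ n ih =>
    intro h
    rcases Nat.lt_or_ge (e+1) (n+1) with h' | h'
    · have hdn : e+1 ≤ n := by omega
      rw [Finset.sum_Icc_succ_top (by omega), ih hdn]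
      have e1 : (n+1) * n.choose e = (n+1).choose (e+1) * (e+1) :=
        Nat.add_one_mul_choose_eq n e
      have e1' : ((n:ℚ)+1) * (n.choose e : ℚ) = ((n+1).choose (e+1) : ℚ) * ((e:ℚ)+1) := by
        exact_mod_cast congrArg (Nat.cast : ℕ → ℚ) e1
      have pascal : ((n+1).choose (e+1) : ℚ) = (n.choose (e+1) : ℚ) + (n.choose e : ℚ) := by
        push_cast [Nat.choose_succ_succ' n e]; ring
      have hn1 : ((n:ℚ)+1) ≠ 0 := by positivity
      have he1 : ((e:ℚ)+1) ≠ 0 := by positivity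
      have h2 : (((n+1).choose (e+1) : ℚ))/((n:ℚ)+1) = ((n.choose e : ℚ))/((e:ℚ)+1) := by
        rw [div_eq_div_iff hn1 he1]
        linear_combination -e1'
      push_cast
      rw [h2, ← add_div, ← pascal]
    · have : e + 1 = n+1 := by omega
      rw [this]
      simp [Nat.choose_self]

lemma main_aux (n j : ℕ) (hn : 1 ≤ n) (hj : j < n) :
    ∑ k ∈ Finset.Icc j n,
      (-1 : ℚ) ^ (k - j) * (stirling2 n k : ℚ) * (stirling1 k j : ℚ) * harmonic k
      = ((n.choose j : ℚ) - 1) * _root_.bernoulli (n - j) / ((n - j : ℕ) : ℚ) := by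
  have lhs_eq : ∑ k ∈ Finset.Icc j n,
      (-1 : ℚ) ^ (k - j) * (stirling2 n k : ℚ) * (stirling1 k j : ℚ) * harmonic k
      = (Pharm n).coeff j := by
    unfold Pharm
    rw [finset_sum_coeff]
    rw [← Finset.sum_subset (s₁ := Finset.Icc j n) (s₂ := range (n+1))
      (fun k hk => by rw [Finset.mem_Icc] at hk; exact Finset.mem_range.2 (by omega))
      (fun k hk hk' => by
        rw [Finset.mem_range] at hk
        rw [Finset.mem_Icc] at hk'
        have : k < j := by omega
        rw [coeff_C_mul, dp_coeff, stirling1_eq_zero this]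
        simp)]
    apply Finset.sum_congr rfl
    intro k _
    rw [coeff_C_mul, dp_coeff]
    ring
  rw [lhs_eq, Pharm_eq, finset_sum_coeff]
  set d := n - j with hd
  have hd1 : 1 ≤ d := by omega
  have hdn : d ≤ n := by omega
  have step1 : ∀ m ∈ Icc 1 n, (C ((m:ℚ)⁻¹) * X^(n-m)
        * (Polynomial.bernoulli m - C (_root_.bernoulli m))).coeff j
      = if d ≤ m then ((m:ℚ))⁻¹ * ((Polynomial.bernoulli m - C (_root_.bernoulli m)).coeff (m-d))
        else 0 := by
    intro m hm
    rw [Finset.mem_Icc] at hm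
    rw [mul_assoc, mul_comm ((X:ℚ[X])^(n-m)), ← mul_assoc, coeff_mul_X_pow']
    rcases le_or_gt d m with h | h
    · rw [if_pos (by omega : n - m ≤ j), if_pos h, coeff_C_mul]
      congr 2
      omega
    · rw [if_neg (by omega : ¬ (n - m ≤ j)), if_neg (by omega)]
  rw [Finset.sum_congr rfl step1]
  rw [Finset.sum_ite, Finset.sum_const_zero, add_zero]
  have hfilter : Finset.filter (fun m => d ≤ m) (Icc 1 n) = Icc d n := by
    ext m
    simp only [Finset.mem_filter, Finset.mem_Icc]
    omega
  rw [hfilter]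
  have step2 : ∀ m ∈ Icc d n, ((m:ℚ))⁻¹ * ((Polynomial.bernoulli m - C (_root_.bernoulli m)).coeff (m-d))
      = _root_.bernoulli d * ((m.choose d : ℚ)/m)
        - (if m = d then (_root_.bernoulli d)/d else 0) := by
    intro m hm
    rw [Finset.mem_Icc] at hm
    rw [coeff_sub, bernoulli_coeff m (m-d) (by omega),
      (by omega : m - (m - d) = d), Nat.choose_symm (by omega : d ≤ m), coeff_C]
    rw [mul_sub]
    rcases eq_or_ne m d with h | hne
    · rw [if_pos (by omega : m - d = 0), if_pos h, h, Nat.choose_self]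
      push_cast
      ring
    · rw [if_neg (by omega : ¬ m - d = 0), if_neg hne]
      ring
  rw [Finset.sum_congr rfl step2, Finset.sum_sub_distrib]
  rw [← Finset.mul_sum, choose_div_sum d hd1 n hdn]
  rw [Finset.sum_ite_eq' (Icc d n) d (fun _ => (_root_.bernoulli d)/d)]
  rw [if_pos (Finset.mem_Icc.2 ⟨le_refl d, hdn⟩)]
  have : n.choose d = n.choose j := by
    rw [hd, Nat.choose_symm (by omega)]
  rw [this]
  field_simp

end Helpers

theorem main_theorem (n j : ℕ) (hn : 1 ≤ n) (hj : j < n) :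
    ∑ k ∈ Finset.Icc j n,
      (-1 : ℚ) ^ (k - j) * (stirling2 n k : ℚ) * (stirling1 k j : ℚ) * harmonic k
      = ((n.choose j : ℚ) - 1) * bernoulli (n - j) / ((n - j : ℕ) : ℚ) :=
  main_aux n j hn hj
end

section
/- For every integer n ≥ 4, ∑_{k=3}^{n} (-1)^{k-1} · {n k} · (k-1)! · ((H_{k-1})^2 - H_{k-1}^{(2)}) · H_k = ((n^2 + 2)/3) · B_{n-3}. -/
/-- The generalized harmonic number of order 2. -/
def harmonic2 (n : ℕ) : ℚ := ∑ i ∈ Finset.range n, (1 : ℚ) / ((i : ℚ) + 1) ^ 2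

theorem stirling2_eq_stirlingSecond : stirling2 = Nat.stirlingSecond := by
  ext n k
  induction n generalizing k with
  | zero => cases k <;> rfl
  | succ n ih =>
    cases k with
    | zero => rfl
    | succ k => simp only [stirling2, Nat.stirlingSecond_succ_succ, ih]

section StirlingDescPochhammer

open Finset Polynomial Nat

theorem sum_stirlingSecond_succ_mul {R : Type*} [CommSemiring R] (n : ℕ) (v : ℕ → R) :
    ∑ k ∈ range (n + 1 + 1), (stirlingSecond (n + 1) k : R) * v k =
      ∑ k ∈ range (n + 1), (stirlingSecond n k : R) * (k * v k + v (k + 1)) := by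
  have shift : ∑ k ∈ range (n + 1), (stirlingSecond n k : R) * (k * v k) =
      ∑ k ∈ range (n + 1), (stirlingSecond n (k + 1) : R) * ((k + 1) * v (k + 1)) := by
    have h := sum_range_succ' (fun k => (stirlingSecond n k : R) * (k * v k)) (n + 1)
    rw [sum_range_succ, stirlingSecond_eq_zero_of_lt n.lt_succ_self] at h
    simpa using h
  rw [sum_range_succ', stirlingSecond_succ_zero, cast_zero, zero_mul, add_zero]
  simp only [mul_add, sum_add_distrib]
  rw [shift, ← sum_add_distrib]
  refine sum_congr rfl fun k _ => ?_
  rw [stirlingSecond_succ_succ]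
  push_cast
  ring

theorem sum_stirlingSecond_mul_descPochhammer {R : Type*} [CommRing R] (n : ℕ) :
    ∑ k ∈ range (n + 1), (stirlingSecond n k : R[X]) * descPochhammer R k = X ^ n := by
  induction n with
  | zero => simp
  | succ n ih =>
    rw [sum_stirlingSecond_succ_mul, pow_succ, ← ih, sum_mul]
    refine sum_congr rfl fun k _ => ?_
    rw [descPochhammer_succ_right]
    ring

theorem coeff_descPochhammer_succ_succ {R : Type*} [Ring R] (k m : ℕ) :
    (descPochhammer R (k + 1)).coeff (m + 1) =
      (descPochhammer R k).coeff m - k * (descPochhammer R k).coeff (m + 1) := by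
  rw [descPochhammer_succ_right, mul_sub, coeff_sub, coeff_mul_X, ← C_eq_natCast, coeff_mul_C,
    Nat.cast_comm]

theorem coeff_descPochhammer_succ_one {R : Type*} [CommRing R] (k : ℕ) :
    (descPochhammer R (k + 1)).coeff 1 = (-1) ^ k * k ! := by
  induction k with
  | zero => simp
  | succ k ih =>
    rw [coeff_descPochhammer_succ_succ, ih, coeff_zero_eq_eval_zero, descPochhammer_eval_zero,
      if_neg k.succ_ne_zero, factorial_succ]
    push_cast
    ring

theorem coeff_descPochhammer_succ_two (k : ℕ) :
    (descPochhammer ℚ (k + 1)).coeff 2 = (-1) ^ (k + 1) * k ! * harmonic k := by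
  induction k with
  | zero => simp [coeff_X]
  | succ k ih =>
    rw [coeff_descPochhammer_succ_succ, ih, coeff_descPochhammer_succ_one, harmonic_succ,
      factorial_succ]
    push_cast
    field_simp
    ring

theorem harmonic2_succ (n : ℕ) : harmonic2 (n + 1) = harmonic2 n + 1 / ((n : ℚ) + 1) ^ 2 := by
  simp [harmonic2, sum_range_succ]

theorem coeff_descPochhammer_succ_three (k : ℕ) :
    (descPochhammer ℚ (k + 1)).coeff 3 = (-1) ^ k * k ! * (harmonic k ^ 2 - harmonic2 k) / 2 := by
  induction k with
  | zero => simp [harmonic2, coeff_X]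
  | succ k ih =>
    rw [coeff_descPochhammer_succ_succ, ih, coeff_descPochhammer_succ_two, harmonic_succ,
      harmonic2_succ, factorial_succ]
    push_cast
    field_simp
    ring

theorem descPochhammer_succ_eval_add_one {R : Type*} [CommRing R] (k : ℕ) (x : R) :
    (descPochhammer R (k + 1)).eval (x + 1) =
      (k + 1) * (descPochhammer R k).eval x + (descPochhammer R (k + 1)).eval x := by
  have h : (descPochhammer R (k + 1)).eval (x + 1) = (x + 1) * (descPochhammer R k).eval x := by
    simp [descPochhammer_succ_left, eval_comp]
  rw [h, descPochhammer_succ_eval]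
  ring

theorem sum_stirlingSecond_div_mul_descPochhammer_eval (n N : ℕ) :
    ∑ k ∈ range (n + 1), (stirlingSecond n k : ℚ) / (k + 1) *
        (descPochhammer ℚ (k + 1)).eval (N : ℚ) = ∑ x ∈ range N, (x : ℚ) ^ n := by
  induction N with
  | zero => simp
  | succ N ih =>
    have h := congrArg (eval (N : ℚ)) (sum_stirlingSecond_mul_descPochhammer (R := ℚ) n)
    simp only [eval_finsetSum, eval_mul, eval_natCast, eval_pow, eval_X] at h
    rw [sum_range_succ (fun x : ℕ => (x : ℚ) ^ n), ← ih, ← h, ← sum_add_distrib, cast_succ]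
    refine sum_congr rfl fun k _ => ?_
    rw [descPochhammer_succ_eval_add_one]
    field_simp
    ring

theorem sum_stirlingSecond_div_mul_descPochhammer_eq_bernoulli (n : ℕ) :
    ∑ k ∈ range (n + 1), C ((stirlingSecond n k : ℚ) / (k + 1)) * descPochhammer ℚ (k + 1) =
      C ((n + 1 : ℚ)⁻¹) * (Polynomial.bernoulli (n + 1) - C (_root_.bernoulli (n + 1))) := by
  -- at every natural number `N` both sides evaluate to `∑ x < N, x ^ n`
  refine eq_of_infinite_eval_eq _ _ (Set.Infinite.mono ?_ (Set.infinite_range_of_injective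
    Nat.cast_injective))
  rintro _ ⟨N, rfl⟩
  have h := sum_range_pow_eq_bernoulli_sub N n
  show eval _ _ = eval _ _
  simp only [eval_finsetSum, eval_mul, eval_C, eval_sub,
    sum_stirlingSecond_div_mul_descPochhammer_eval, ← h]
  field_simp

theorem sum_stirlingSecond_div_mul_coeff_descPochhammer (n m : ℕ) :
    ∑ k ∈ range (n + 1), (stirlingSecond n k : ℚ) / (k + 1) *
        (descPochhammer ℚ (k + 1)).coeff (m + 1) =
      _root_.bernoulli (n - m) * n.choose m / (m + 1) := by
  have h := congrArg (coeff · (m + 1)) (sum_stirlingSecond_div_mul_descPochhammer_eq_bernoulli n)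
  simp only [finsetSum_coeff, coeff_C_mul, coeff_sub, coeff_C, if_neg m.succ_ne_zero,
    sub_zero] at h
  rw [h, coeff_bernoulli, Nat.add_sub_add_right]
  split_ifs with hm
  · have h : ((n + 1 : ℕ) : ℚ) * n.choose m = (n + 1).choose (m + 1) * (m + 1 : ℕ) := by
      exact_mod_cast add_one_mul_choose_eq n m
    push_cast at h
    field_simp
    linear_combination -_root_.bernoulli (n - m) * h
  · rw [choose_eq_zero_of_lt (by omega)]
    simp

noncomputable def stirlingHarmonicSum (m n : ℕ) : ℚ :=
  ∑ k ∈ range (n + 1), (stirlingSecond n k : ℚ) * (descPochhammer ℚ k).coeff m * harmonic k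

theorem stirlingHarmonicSum_zero_left (n : ℕ) : stirlingHarmonicSum 0 n = 0 := by
  refine sum_eq_zero fun k _ => ?_
  rcases k with _ | k
  · simp
  · simp [coeff_zero_eq_eval_zero]

theorem stirlingHarmonicSum_succ_succ (m n : ℕ) :
    stirlingHarmonicSum (m + 1) (n + 1) =
      stirlingHarmonicSum m n + _root_.bernoulli (n - m) * n.choose m / (m + 1) := by
  simp only [stirlingHarmonicSum, mul_assoc]
  rw [sum_stirlingSecond_succ_mul,
    ← sum_stirlingSecond_div_mul_coeff_descPochhammer, ← sum_add_distrib]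
  refine sum_congr rfl fun k _ => ?_
  have hc := coeff_descPochhammer_succ_succ (R := ℚ) k m
  have hH : harmonic (k + 1) = harmonic k + 1 / (k + 1) := by
    rw [harmonic_succ]
    push_cast
    ring
  linear_combination (stirlingSecond n k : ℚ) * (harmonic k * hc +
    (descPochhammer ℚ (k + 1)).coeff (m + 1) * hH)

theorem two_mul_stirlingHarmonicSum_three (n : ℕ) :
    2 * stirlingHarmonicSum 3 n = ∑ k ∈ Icc 3 n, (-1 : ℚ) ^ (k - 1) * (stirlingSecond n k : ℚ) *
      ((k - 1)! : ℚ) * (harmonic (k - 1) ^ 2 - harmonic2 (k - 1)) * harmonic k := by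
  have hsub : Icc 3 n ⊆ range (n + 1) := fun k hk => by
    simp only [mem_Icc, mem_range] at hk ⊢
    omega
  have hlow : ∀ k ∈ range (n + 1), k ∉ Icc 3 n →
      2 * ((stirlingSecond n k : ℚ) * (descPochhammer ℚ k).coeff 3 * harmonic k) = 0 := by
    intro k hk hk3
    simp only [mem_Icc, mem_range] at hk hk3
    rw [coeff_eq_zero_of_natDegree_lt (by rw [descPochhammer_natDegree]; omega)]
    ring
  rw [stirlingHarmonicSum, mul_sum, ← sum_subset hsub hlow]
  refine sum_congr rfl fun k hk => ?_
  obtain ⟨j, rfl⟩ : ∃ j, k = j + 1 := ⟨k - 1, by simp only [mem_Icc] at hk; omega⟩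
  rw [Nat.add_sub_cancel, coeff_descPochhammer_succ_three]
  ring

end StirlingDescPochhammer

theorem stirling_harmonic_bernoulli (n : ℕ) (hn : 4 ≤ n) :
    ∑ k ∈ Finset.Icc 3 n,
      (-1 : ℚ) ^ (k - 1) * (stirling2 n k : ℚ) * ((k - 1).factorial : ℚ) *
        ((harmonic (k - 1)) ^ 2 - harmonic2 (k - 1)) * harmonic k
      = (((n : ℚ) ^ 2 + 2) / 3) * bernoulli (n - 3) := by
  obtain ⟨t, rfl⟩ := Nat.exists_eq_add_of_le' (by omega : 3 ≤ n)
  rw [stirling2_eq_stirlingSecond, ← two_mul_stirlingHarmonicSum_three,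
    stirlingHarmonicSum_succ_succ, stirlingHarmonicSum_succ_succ, stirlingHarmonicSum_succ_succ,
    stirlingHarmonicSum_zero_left]
  simp only [Nat.add_sub_cancel, Nat.sub_zero, Nat.choose_zero_right, Nat.choose_one_right,
    Nat.cast_choose_two]
  push_cast
  field_simp
  ring
end

section
/- For all positive integers n and m, ∑_{j=1}^{n} (C(n,j) - 1) · (B_j/j) · m^{n-j} = m^n · (H_m − H_n) − ∑_{j=1}^{m} (m-j)^n / j. -/
open Finset

lemma altB (N i : ℕ) :
    ∑ r ∈ range (N+1), (-1:ℚ)^r * (N.choose r) / (r+i+1)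
      = (N.factorial : ℚ) * (i.factorial : ℚ) / ((N+i+1).factorial : ℚ) := by
  induction N generalizing i with
  | zero => simp; rw [Nat.factorial_succ]; push_cast; field_simp
  | succ N IH =>
    rw [Finset.sum_range_succ']
    have h1 : ∀ r ∈ range (N+1), (-1:ℚ)^(r+1) * (((N+1).choose (r+1) : ℕ)) / (↑(r+1)+i+1)
        = -((-1:ℚ)^r * (N.choose r) / (↑r+(↑(i+1):ℚ)+1)) + (-1:ℚ)^(r+1) * (N.choose (r+1)) / (↑(r+1)+i+1) := by
      intro r _
      rw [Nat.choose_succ_succ]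
      push_cast
      rw [pow_succ]
      ring
    rw [Finset.sum_congr rfl h1, Finset.sum_add_distrib, Finset.sum_neg_distrib, IH (i+1)]
    have h3 : ∑ r ∈ range (N+1), (-1:ℚ)^(r+1) * (N.choose (r+1)) / (↑(r+1)+i+1)
        = (N.factorial : ℚ) * (i.factorial : ℚ) / ((N+i+1).factorial : ℚ) - 1/(i+1) := by
      have h := IH i
      rw [Finset.sum_range_succ'] at h
      rw [Finset.sum_range_succ]
      simp only [Nat.choose_succ_self, Nat.cast_zero, mul_zero, zero_div, add_zero,
        pow_zero, Nat.choose_zero_right, Nat.cast_one, mul_one, one_mul, Nat.cast_zero,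
        zero_add, Nat.cast_add, Nat.cast_one] at h ⊢
      push_cast at h ⊢
      linarith
    rw [h3]
    have e1 : N+1+i+1 = (N+i+1)+1 := by ring
    have e2 : N+(i+1)+1 = (N+i+1)+1 := by ring
    rw [e1, e2, Nat.factorial_succ (N+i+1), Nat.factorial_succ N, Nat.factorial_succ i]
    have hf : ((N+i+1).factorial : ℚ) ≠ 0 := by exact_mod_cast (N+i+1).factorial_ne_zero
    have hi : (i:ℚ)+1 ≠ 0 := by positivity
    simp only [Nat.choose_zero_right, pow_zero, Nat.cast_one, one_mul, Nat.cast_zero, zero_add]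
    push_cast
    field_simp
    ring

lemma altH (n : ℕ) :
    ∑ k ∈ Icc 1 n, (-1:ℚ)^(k+1) * (n.choose k) / k = harmonic n := by
  induction n with
  | zero => simp
  | succ n IH =>
    have hsplit : ∀ k ∈ Icc 1 (n+1), (-1:ℚ)^(k+1) * ((n+1).choose k) / k
        = (-1:ℚ)^(k+1) * (n.choose k) / k + (-1:ℚ)^(k+1) * (n.choose (k-1)) / k := by
      intro k hk
      simp only [mem_Icc] at hk
      obtain ⟨r, rfl⟩ : ∃ r, k = r + 1 := ⟨k - 1, by omega⟩
      rw [Nat.choose_succ_succ, show r+1-1 = r from rfl]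
      push_cast
      ring
    rw [Finset.sum_congr rfl hsplit, Finset.sum_add_distrib]
    have h1 : ∑ k ∈ Icc 1 (n+1), (-1:ℚ)^(k+1) * (n.choose k) / k
        = ∑ k ∈ Icc 1 n, (-1:ℚ)^(k+1) * (n.choose k) / k := by
      rw [← Finset.Ico_add_one_right_eq_Icc, ← Finset.Ico_add_one_right_eq_Icc, Finset.sum_Ico_succ_top (by omega)]
      simp [Nat.choose_succ_self]
    have h2 : ∑ k ∈ Icc 1 (n+1), (-1:ℚ)^(k+1) * (n.choose (k-1)) / k = 1/(n+1) := by
      rw [← Finset.Ico_add_one_right_eq_Icc, Finset.sum_Ico_eq_sum_range]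
      simp only [Nat.add_sub_cancel, show n+1+1-1 = n+1 from rfl]
      have : ∀ r ∈ range (n+1), (-1:ℚ)^(1+r+1) * (n.choose (1+r-1)) / (↑(1+r))
          = (-1:ℚ)^r * (n.choose r) / (↑r + (0:ℕ) + 1) := by
        intro r _
        have : 1 + r - 1 = r := by omega
        rw [this]
        push_cast
        rw [show 1+r+1 = r+2 from by ring, pow_add]
        ring_nf
      rw [Finset.sum_congr rfl this, altB n 0]
      rw [show n + 0 + 1 = n+1 from rfl, Nat.factorial_succ]
      have hf : (n.factorial : ℚ) ≠ 0 := by exact_mod_cast n.factorial_ne_zero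
      push_cast
      field_simp
      ring
    rw [h1, h2, IH, harmonic_succ]
    push_cast
    ring

lemma altC (n i : ℕ) (hi : 1 ≤ i) (hin : i < n) :
    ∑ k ∈ Icc (i+1) n, (-1:ℚ)^(k+1) * (n.choose k) * (k.choose i) / k
      = (-1:ℚ)^i * ((n.choose i : ℚ) - 1) / i := by
  set N := n - i with hN
  have hNn : n = N + i := by omega
  have hN1 : 1 ≤ N := by omega
  rw [← Finset.Ico_add_one_right_eq_Icc, Finset.sum_Ico_eq_sum_range]
  rw [show n + 1 - (i+1) = N from by omega]
  have key : ∀ r ∈ range N, (-1:ℚ)^((i+1+r)+1) * (n.choose (i+1+r)) * ((i+1+r).choose i) / (↑(i+1+r))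
      = ((n.choose i : ℚ)) * ((-1:ℚ)^(i+1) * ((-1:ℚ)^(r+1) * (N.choose (r+1)) / (↑(r+1) + ↑(i-1) + 1))) := by
    intro r hr
    simp only [mem_range] at hr
    have hk : i+1+r ≤ n := by omega
    have hmul : n.choose (i+1+r) * ((i+1+r).choose i) = n.choose i * (N.choose (r+1)) := by
      have := Nat.choose_mul (n := n) (by omega : i ≤ i+1+r)
      rwa [show i+1+r-i = r+1 from by omega, ← hN] at this
    have hcast : ((n.choose (i+1+r) : ℚ)) * ((i+1+r).choose i) = (n.choose i : ℚ) * (N.choose (r+1)) := by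
      exact_mod_cast congrArg (Nat.cast (R := ℚ)) hmul
    have hiq : ((i-1 : ℕ) : ℚ) = (i : ℚ) - 1 := by
      have : (1:ℕ) ≤ i := hi
      push_cast [this]; ring
    rw [show (-1:ℚ)^((i+1+r)+1) = (-1:ℚ)^(i+1) * (-1:ℚ)^(r+1) from by rw [← pow_add]; ring_nf]
    rw [hiq]
    push_cast
    field_simp
    ring_nf
    ring_nf at hcast
    have h0 : (1 + (i:ℚ) + r) ≠ 0 := by positivity
    rw [hcast]
    field_simp
    ring
  rw [Finset.sum_congr rfl key, ← Finset.mul_sum, ← Finset.mul_sum]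
  -- now evaluate ∑ r ∈ range N, (-1)^(r+1) * C(N,r+1)/(r+1+(i-1)+1)
  have hB := altB N (i-1)
  rw [Finset.sum_range_succ'] at hB
  have hsum : ∑ r ∈ range N, (-1:ℚ)^(r+1) * (N.choose (r+1)) / (↑(r+1) + ↑(i-1) + 1)
      = (N.factorial : ℚ) * ((i-1).factorial : ℚ) / (n.factorial : ℚ) - 1/i := by
    have h0 : ((-1:ℚ)^0 * (N.choose 0) / (↑(0:ℕ) + ↑(i-1) + 1)) = 1/i := by
      simp
      rw [show ((i-1 : ℕ) : ℚ) = (i:ℚ) - 1 from by push_cast [hi]; ring]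
      ring_nf
    rw [h0] at hB
    rw [show N + (i-1) + 1 = n from by omega] at hB
    linarith
  rw [hsum]
  have hfact : (n.choose i : ℚ) * ((N.factorial : ℚ) * ((i-1).factorial : ℚ)) * i = (n.factorial : ℚ) := by
    have := Nat.choose_mul_factorial_mul_factorial hin.le
    have hi' : i.factorial = i * (i-1).factorial := by
      rw [show i = (i-1)+1 from by omega, Nat.factorial_succ]; simp
    rw [hi'] at this
    rw [show n - i = N from rfl] at this
    have hnat : n.choose i * (i * (i - 1).factorial * N.factorial) = n.factorial := by
      rw [← this]; ring
    push_cast [← hnat]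
    ring
  have hnf : (n.factorial : ℚ) ≠ 0 := by exact_mod_cast n.factorial_ne_zero
  have hiq : (i:ℚ) ≠ 0 := by positivity
  rw [pow_succ]
  field_simp
  ring_nf
  linear_combination (-1:ℚ) * hfact

lemma expandPow (x y : ℚ) (n : ℕ) :
    x^n - (x - y)^n = ∑ k ∈ Icc 1 n, (-1:ℚ)^(k+1) * (n.choose k) * x^(n-k) * y^k := by
  rw [sub_pow, Finset.sum_range_succ]
  have h1 : (-1:ℚ)^(n+n) * x^n * y^(n-n) * ((n.choose n : ℕ) : ℚ) = x^n := by
    rw [show ((-1:ℚ))^(n+n) = 1 from Even.neg_one_pow ⟨n, rfl⟩]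
    simp
  rw [h1]
  have key : ∑ k ∈ Icc 1 n, (-1:ℚ)^(k+1) * (n.choose k) * x^(n-k) * y^k
      = ∑ j ∈ range n, -((-1:ℚ)^((n-1-j)+n) * x^(n-1-j) * y^(n-(n-1-j)) * ((n.choose (n-1-j) : ℕ) : ℚ)) := by
    rw [← Finset.Ico_add_one_right_eq_Icc, Finset.sum_Ico_eq_sum_range, show n+1-1 = n from rfl]
    apply Finset.sum_congr rfl
    intro r hr
    simp only [mem_range] at hr
    obtain ⟨d, rfl⟩ : ∃ d, n = r+1+d := ⟨n - (r+1), by omega⟩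
    rw [show r+1+d-1-r = d from by omega, show r+1+d-(1+r) = d from by omega,
      show r+1+d-d = 1+r from by omega]
    rw [show (r+1+d).choose d = (r+1+d).choose (1+r) from by
      rw [← Nat.choose_symm (show 1+r ≤ r+1+d from by omega)]
      congr 1
      omega]
    rw [show d + (r+1+d) = 2*d + (r+1) from by ring, pow_add ((-1:ℚ)) (2*d) (r+1), pow_mul]
    rw [show 1+r+1 = (r+1)+1 from by ring, pow_succ]
    norm_num
    ring
  rw [key]
  rw [show (∑ j ∈ range n, -((-1:ℚ)^((n-1-j)+n) * x^(n-1-j) * y^(n-(n-1-j)) * ((n.choose (n-1-j) : ℕ) : ℚ)))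
      = ∑ j ∈ range n, -((-1:ℚ)^(j+n) * x^j * y^(n-j) * ((n.choose j : ℕ) : ℚ)) from
    Finset.sum_range_reflect (fun mm => -((-1:ℚ)^(mm+n) * x^mm * y^(n-mm) * ((n.choose mm : ℕ) : ℚ))) n]
  rw [Finset.sum_neg_distrib]
  ring

theorem agoh_recurrence (n m : ℕ) (hn : 1 ≤ n) (hm : 1 ≤ m) :
    ∑ j ∈ Finset.Icc 1 n, ((n.choose j : ℚ) - 1) * (bernoulli j / (j : ℚ)) * (m : ℚ) ^ (n - j)
      = (m : ℚ) ^ n * (harmonic m - harmonic n)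
        - ∑ j ∈ Finset.Icc 1 m, ((m - j : ℕ) : ℚ) ^ n / (j : ℚ) := by
  classical
  have hharm : harmonic m = ∑ j ∈ Icc 1 m, (1:ℚ)/j := by
    rw [harmonic, ← Finset.Ico_add_one_right_eq_Icc, Finset.sum_Ico_eq_sum_range,
      show m + 1 - 1 = m from rfl]
    apply Finset.sum_congr rfl
    intro i _
    rw [one_div]
    congr 1
    push_cast
    ring
  set X := ∑ j ∈ Icc 1 m, ((m:ℚ)^n - ((m - j : ℕ) : ℚ)^n)/(j:ℚ) with hXdef
  have hXgoal : (m:ℚ)^n * (harmonic m - harmonic n) - ∑ j ∈ Icc 1 m, ((m-j:ℕ):ℚ)^n/(j:ℚ)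
      = X - (m:ℚ)^n * harmonic n := by
    have hX2 : X = ∑ j ∈ Icc 1 m, ((m:ℚ)^n * (1/(j:ℚ))) - ∑ j ∈ Icc 1 m, ((m-j:ℕ):ℚ)^n/(j:ℚ) := by
      rw [hXdef, ← Finset.sum_sub_distrib]
      apply Finset.sum_congr rfl
      intro j _
      ring
    rw [hX2, ← Finset.mul_sum, ← hharm]
    ring
  rw [hXgoal, eq_sub_iff_add_eq]
  have step1 : X = ∑ k ∈ Icc 1 n, ((-1:ℚ)^(k+1) * (n.choose k) * (m:ℚ)^(n-k) * ∑ j ∈ Icc 1 m, (j:ℚ)^(k-1)) := by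
    have e1 : ∀ j ∈ Icc 1 m, ((m:ℚ)^n - ((m-j:ℕ):ℚ)^n)/(j:ℚ)
        = ∑ k ∈ Icc 1 n, (-1:ℚ)^(k+1) * (n.choose k) * (m:ℚ)^(n-k) * (j:ℚ)^(k-1) := by
      intro j hj
      simp only [mem_Icc] at hj
      have hcast : ((m-j:ℕ):ℚ) = (m:ℚ) - (j:ℚ) := by
        have := hj.2
        push_cast [this]
        ring
      rw [hcast, expandPow, Finset.sum_div]
      apply Finset.sum_congr rfl
      intro k hk
      simp only [mem_Icc] at hk
      have hj0 : (j:ℚ) ≠ 0 := by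
        have : (0:ℚ) < j := by exact_mod_cast hj.1.trans_lt' (by norm_num)
        exact ne_of_gt this
      have hjk : (j:ℚ)^k = (j:ℚ)^(k-1) * (j:ℚ) := by
        rw [← pow_succ]
        congr 1
        omega
      rw [hjk]
      field_simp
    rw [hXdef, Finset.sum_congr rfl e1, Finset.sum_comm]
    apply Finset.sum_congr rfl
    intro k _
    rw [Finset.mul_sum]
  have step2 : ∀ k ∈ Icc 1 n, (∑ j ∈ Icc 1 m, (j:ℚ)^(k-1))
      = ∑ i ∈ range k, bernoulli' i * (k.choose i) * (m:ℚ)^(k-i) / k := by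
    intro k hk
    simp only [mem_Icc] at hk
    have h := sum_Ico_pow m (k-1)
    rw [show k-1+1 = k from by omega] at h
    rw [show (((k-1 : ℕ) : ℚ)) = (k:ℚ) - 1 from by push_cast [hk.1]; ring] at h
    rw [show (k:ℚ) - 1 + 1 = (k:ℚ) from by ring] at h
    rw [← Finset.Ico_add_one_right_eq_Icc]
    exact_mod_cast h
  have step3 : X = ∑ i ∈ range n, bernoulli' i * (m:ℚ)^(n-i)
      * (∑ k ∈ Icc (i+1) n, (-1:ℚ)^(k+1) * (n.choose k) * (k.choose i) / k) := by
    rw [step1, Finset.sum_congr rfl (fun k hk => by rw [step2 k hk])]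
    rw [Finset.sum_congr rfl (fun k hk => Finset.mul_sum _ _ _)]
    rw [Finset.sum_comm' (s := Icc 1 n) (t := fun k => range k) (t' := range n)
      (s' := fun i => Icc (i+1) n) (fun k i => by simp only [mem_Icc, mem_range]; omega)]
    apply Finset.sum_congr rfl
    intro i hi
    rw [Finset.mul_sum]
    apply Finset.sum_congr rfl
    intro k hk
    simp only [mem_range] at hi
    simp only [mem_Icc] at hk
    rw [show (m:ℚ)^(n-i) = (m:ℚ)^(n-k) * (m:ℚ)^(k-i) from by
      rw [← pow_add]; congr 1; omega]
    ring
  obtain ⟨n', rfl⟩ : ∃ n', n = n'+1 := ⟨n-1, by omega⟩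
  rw [step3, Finset.sum_range_succ']
  have hzero : bernoulli' 0 * (m:ℚ)^(n'+1-0)
      * (∑ k ∈ Icc (0+1) (n'+1), (-1:ℚ)^(k+1) * ((n'+1).choose k) * (k.choose 0) / k)
      = (m:ℚ)^(n'+1) * harmonic (n'+1) := by
    rw [bernoulli'_zero]
    simp only [Nat.choose_zero_right, Nat.cast_one, mul_one, Nat.sub_zero, one_mul, zero_add]
    rw [← altH (n'+1)]
  rw [hzero]
  have hfin : ∀ (s A B M c : ℚ), s * s = 1 → A * (B / c) * M = s * B * M * (s * A / c) := by
    intro s A B M c h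
    rw [div_eq_mul_inv, div_eq_mul_inv]
    linear_combination (-(A*B*M*c⁻¹)) * h
  have hLHS : ∑ j ∈ Icc 1 (n'+1), (((n'+1).choose j : ℚ) - 1) * (bernoulli j / (j : ℚ)) * (m : ℚ) ^ (n'+1 - j)
      = ∑ i ∈ range n', bernoulli' (i+1) * (m:ℚ)^(n'+1-(i+1))
        * (∑ k ∈ Icc (i+1+1) (n'+1), (-1:ℚ)^(k+1) * ((n'+1).choose k) * (k.choose (i+1)) / k) := by
    rw [← Finset.Ico_add_one_right_eq_Icc, Finset.sum_Ico_eq_sum_range,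
      show n'+1+1-1 = n'+1 from rfl, Finset.sum_range_succ]
    rw [show (((n'+1).choose (1+n') : ℚ) - 1) = 0 from by
      rw [show 1+n' = n'+1 from by ring, Nat.choose_self]; norm_num]
    rw [zero_mul, zero_mul, add_zero]
    apply Finset.sum_congr rfl
    intro i hi
    simp only [mem_range] at hi
    rw [altC (n'+1) (i+1) (by omega) (by omega)]
    rw [show (1+i) = (i+1) from by ring]
    rw [bernoulli'_eq_bernoulli]
    exact hfin _ _ _ _ _ (by rw [← pow_add]; exact Even.neg_one_pow ⟨i+1, by ring⟩)
  rw [hLHS]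
end

section
/- For all positive integers n and m, ∑_{j=1}^{n} (-1)^j · (C(n,j) - 1) · (B_j/j) · m^{n-j} = m^n · (H_m − H_n + (n-1)/m) − ∑_{j=1}^{m} (m-j)^n / j. -/
open Finset

private lemma choose_shift_sum (n j : ℕ) (hj : 1 ≤ j) (hjn : j ≤ n) :
    ∑ q ∈ Icc (j+1) n, ((q-1).choose (j-1) : ℚ) = (n.choose j : ℚ) - 1 := by
  have hnat : (∑ q ∈ Icc (j+1) n, (q-1).choose (j-1)) + 1 = n.choose j := by
    have h1 : ∑ r ∈ Icc (j-1) (n-1), r.choose (j-1) = n.choose j := by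
      have := Nat.sum_Icc_choose (n-1) (j-1)
      rwa [show n - 1 + 1 = n by omega, show j - 1 + 1 = j by omega] at this
    rw [← h1]
    have e1 : Icc (j+1) n = Ico (j+1) (n+1) := rfl
    have e2 : Icc (j-1) (n-1) = Ico (j-1) n := by
      rw [show n = n - 1 + 1 by omega]; rfl
    rw [e1, e2, Finset.sum_Ico_eq_sum_range, Finset.sum_Ico_eq_sum_range,
      show n - (j-1) = (n - j) + 1 by omega, Finset.sum_range_succ',
      show n + 1 - (j+1) = n - j by omega]
    have t0 : (j - 1 + 0).choose (j-1) = 1 := by simp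
    rw [t0]
    congr 1
    apply Finset.sum_congr rfl
    intro i _
    congr 1
    omega
  calc ∑ q ∈ Icc (j+1) n, ((q-1).choose (j-1) : ℚ)
      = ((∑ q ∈ Icc (j+1) n, (q-1).choose (j-1) : ℕ) : ℚ) := by push_cast; ring
    _ = (n.choose j : ℚ) - 1 := by
        rw [show (n.choose j : ℚ) = ((∑ q ∈ Icc (j+1) n, (q-1).choose (j-1)) + 1 : ℕ) by
          rw [hnat]]
        push_cast; ring

private lemma inner_hockey (n j : ℕ) (hj : 1 ≤ j) (hjn : j ≤ n) :
    ∑ q ∈ Icc (j+1) n, (q.choose j : ℚ) / (q:ℚ) = ((n.choose j : ℚ) - 1) / (j:ℚ) := by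
  have key : ∀ q ∈ Icc (j+1) n, (q.choose j : ℚ) / (q:ℚ) = ((q-1).choose (j-1) : ℚ) / (j:ℚ) := by
    intro q hq
    simp only [mem_Icc] at hq
    have hnat : q * (q-1).choose (j-1) = q.choose j * j := by
      have h := Nat.add_one_mul_choose_eq (q-1) (j-1)
      rwa [show q-1+1 = q by omega, show j-1+1 = j by omega] at h
    have hq0 : (q:ℚ) ≠ 0 := by
      have : q ≠ 0 := by omega
      exact_mod_cast this
    have hj0 : (j:ℚ) ≠ 0 := by
      have : j ≠ 0 := by omega
      exact_mod_cast this
    rw [div_eq_div_iff hq0 hj0]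
    have h2 : q.choose j * j = (q-1).choose (j-1) * q := by rw [← hnat]; ring
    exact_mod_cast h2
  rw [Finset.sum_congr rfl key, ← Finset.sum_div, choose_shift_sum n j hj hjn]

/-- Faulhaber applied and reindexed: the key "T" identity. -/
private lemma T_eq (n m : ℕ) (hn : 1 ≤ n) :
    ∑ i ∈ range n, (m:ℚ)^i * ∑ k ∈ range m, (k:ℚ)^(n-1-i)
      = (m:ℚ)^n * harmonic n
        + ∑ j ∈ Icc 1 n, ((n.choose j : ℚ) - 1) * (bernoulli j / (j:ℚ)) * (m:ℚ)^(n-j) := by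
  -- Step 1: apply Faulhaber termwise
  have step1 : ∀ i ∈ range n,
      (m:ℚ)^i * ∑ k ∈ range m, (k:ℚ)^(n-1-i)
        = ∑ j ∈ range (n-i), bernoulli j * (((n-i).choose j : ℕ) : ℚ) * (m:ℚ)^(n-j)
            / (((n-i : ℕ)) : ℚ) := by
    intro i hi
    simp only [mem_range] at hi
    rw [sum_range_pow m (n-1-i), Finset.mul_sum]
    rw [show n - 1 - i + 1 = n - i by omega]
    apply Finset.sum_congr rfl
    intro j hj
    simp only [mem_range] at hj
    have hd : ((n - 1 - i : ℕ) : ℚ) + 1 = ((n - i : ℕ) : ℚ) := by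
      exact_mod_cast congrArg (Nat.cast : ℕ → ℚ) (by omega : (n - 1 - i) + 1 = n - i)
    have hpow : (m:ℚ)^i * (m:ℚ)^(n-i-j) = (m:ℚ)^(n-j) := by
      rw [← pow_add]; congr 1; omega
    calc (m:ℚ)^i * (bernoulli j * (((n-i).choose j : ℕ) : ℚ) * (m:ℚ)^(n-i-j)
            / (((n - 1 - i : ℕ) : ℚ) + 1))
        = bernoulli j * (((n-i).choose j : ℕ) : ℚ) * ((m:ℚ)^i * (m:ℚ)^(n-i-j))
            / (((n - 1 - i : ℕ) : ℚ) + 1) := by ring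
      _ = bernoulli j * (((n-i).choose j : ℕ) : ℚ) * (m:ℚ)^(n-j) / (((n-i : ℕ)) : ℚ) := by
          rw [hpow, hd]
  rw [Finset.sum_congr rfl step1]
  -- Step 2: reindex i ↦ q = n - i
  have step2 : ∑ i ∈ range n,
        ∑ j ∈ range (n-i), bernoulli j * (((n-i).choose j : ℕ) : ℚ) * (m:ℚ)^(n-j) / ((n-i : ℕ) : ℚ)
      = ∑ q ∈ Icc 1 n, ∑ j ∈ range q, bernoulli j * ((q.choose j : ℕ) : ℚ) * (m:ℚ)^(n-j) / (q:ℚ) := by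
    have e1 : Icc 1 n = Ico 1 (n+1) := rfl
    rw [e1, Finset.sum_Ico_eq_sum_range, show n + 1 - 1 = n from rfl]
    rw [← Finset.sum_range_reflect
      (fun i => ∑ j ∈ range (1+i), bernoulli j * (((1+i).choose j : ℕ) : ℚ) * (m:ℚ)^(n-j) / ((1+i : ℕ) : ℚ)) n]
    apply Finset.sum_congr rfl
    intro i hi
    simp only [mem_range] at hi
    have h2 : 1 + (n - 1 - i) = n - i := by omega
    simp only [h2]
  rw [step2]
  -- Step 3: swap the double sum
  have step3 : ∑ q ∈ Icc 1 n, ∑ j ∈ range q, bernoulli j * ((q.choose j : ℕ) : ℚ) * (m:ℚ)^(n-j) / (q:ℚ)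
      = ∑ j ∈ range n, ∑ q ∈ Icc (j+1) n, bernoulli j * ((q.choose j : ℕ) : ℚ) * (m:ℚ)^(n-j) / (q:ℚ) := by
    apply Finset.sum_comm'
    intro q j
    simp only [mem_Icc, mem_range]
    omega
  rw [step3]
  -- Step 4: split off j = 0 and evaluate
  rw [Finset.range_eq_Ico, Finset.sum_eq_sum_Ico_succ_bot (by omega : 0 < n)]
  have hzero : ∑ q ∈ Icc (0+1) n, bernoulli 0 * ((q.choose 0 : ℕ) : ℚ) * (m:ℚ)^(n-0) / (q:ℚ)
      = (m:ℚ)^n * harmonic n := by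
    rw [harmonic_eq_sum_Icc, Finset.mul_sum]
    apply Finset.sum_congr rfl
    intro q _
    simp [div_eq_mul_inv]
  rw [hzero]
  congr 1
  have e2 : Icc 1 n = Ico 1 (n+1) := rfl
  rw [e2, Finset.sum_Ico_succ_top (by omega : 1 ≤ n)]
  rw [show ((n.choose n : ℚ) - 1) * (bernoulli n / (n:ℚ)) * (m:ℚ)^(n-n) = 0 by
    simp [Nat.choose_self]]
  rw [add_zero]
  apply Finset.sum_congr rfl
  intro j hj
  simp only [mem_Ico] at hj
  have hj1 : 1 ≤ j := hj.1
  have hjn : j ≤ n := by omega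
  have hfac : ∑ q ∈ Icc (j+1) n, bernoulli j * ((q.choose j : ℕ) : ℚ) * (m:ℚ)^(n-j) / (q:ℚ)
      = bernoulli j * (m:ℚ)^(n-j) * ∑ q ∈ Icc (j+1) n, ((q.choose j : ℕ) : ℚ) / (q:ℚ) := by
    rw [Finset.mul_sum]
    apply Finset.sum_congr rfl
    intro q _
    ring
  rw [hfac, inner_hockey n j hj1 hjn]
  ring

/-- The "A" identity. -/
private lemma A_eq (n m : ℕ) (hn : 1 ≤ n) :
    (m:ℚ)^n * harmonic m - ∑ j ∈ Icc 1 m, ((m - j : ℕ) : ℚ)^n / (j:ℚ)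
      = ∑ i ∈ range n, (m:ℚ)^i * ∑ k ∈ range m, (k:ℚ)^(n-1-i) := by
  have key : ∀ j ∈ Icc 1 m, ((m - j : ℕ) : ℚ)^n / (j:ℚ)
      = (m:ℚ)^n / (j:ℚ) - ∑ i ∈ range n, (m:ℚ)^i * ((m - j : ℕ) : ℚ)^(n-1-i) := by
    intro j hj
    simp only [mem_Icc] at hj
    have hcast : ((m - j : ℕ) : ℚ) = (m:ℚ) - (j:ℚ) := by
      push_cast [hj.2]; ring
    have hj0 : (j:ℚ) ≠ 0 := by
      have : j ≠ 0 := by omega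
      exact_mod_cast this
    have hgeom := geom_sum₂_mul (m:ℚ) ((m - j : ℕ) : ℚ) n
    rw [hcast, show (m:ℚ) - ((m:ℚ) - (j:ℚ)) = (j:ℚ) by ring, ← hcast] at hgeom
    have hpow : ((m - j : ℕ) : ℚ)^n
        = (m:ℚ)^n - (∑ i ∈ range n, (m:ℚ)^i * ((m - j : ℕ) : ℚ)^(n-1-i)) * (j:ℚ) := by
      linarith [hgeom]
    rw [hpow]
    field_simp
  rw [Finset.sum_congr rfl key, Finset.sum_sub_distrib]
  have h1 : ∑ j ∈ Icc 1 m, (m:ℚ)^n / (j:ℚ) = (m:ℚ)^n * harmonic m := by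
    rw [harmonic_eq_sum_Icc, Finset.mul_sum]
    apply Finset.sum_congr rfl
    intro q _
    rw [div_eq_mul_inv]
  rw [h1, sub_sub_cancel, Finset.sum_comm]
  apply Finset.sum_congr rfl
  intro i _
  rw [Finset.mul_sum]
  have e1 : Icc 1 m = Ico 1 (m+1) := rfl
  rw [e1, Finset.sum_Ico_eq_sum_range, show m + 1 - 1 = m from rfl]
  rw [← Finset.sum_range_reflect (fun k => (m:ℚ)^i * ((k:ℕ):ℚ)^(n-1-i)) m]
  apply Finset.sum_congr rfl
  intro k hk
  simp only [mem_range] at hk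
  show (m:ℚ)^i * ((m - (1+k) : ℕ):ℚ)^(n-1-i) = (m:ℚ)^i * ((m-1-k : ℕ):ℚ)^(n-1-i)
  rw [show m - (1+k) = m-1-k by omega]

/-- LHS alternating-sign reduction. -/
private lemma lhs_eq (n m : ℕ) (hn : 1 ≤ n) :
    ∑ j ∈ Icc 1 n, (-1 : ℚ)^j * ((n.choose j : ℚ) - 1) * (bernoulli j / (j:ℚ)) * (m:ℚ)^(n-j)
      = ((n:ℚ) - 1) * (m:ℚ)^(n-1)
        + ∑ j ∈ Icc 1 n, ((n.choose j : ℚ) - 1) * (bernoulli j / (j:ℚ)) * (m:ℚ)^(n-j) := by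
  have e1 : Icc 1 n = Ico 1 (n+1) := rfl
  rw [e1, Finset.sum_eq_sum_Ico_succ_bot (by omega : 1 < n + 1),
      Finset.sum_eq_sum_Ico_succ_bot (by omega : 1 < n + 1)]
  have htail : ∀ j ∈ Ico 2 (n+1),
      (-1 : ℚ)^j * ((n.choose j : ℚ) - 1) * (bernoulli j / (j:ℚ)) * (m:ℚ)^(n-j)
        = ((n.choose j : ℚ) - 1) * (bernoulli j / (j:ℚ)) * (m:ℚ)^(n-j) := by
    intro j hj
    simp only [mem_Ico] at hj
    have hsign : (-1 : ℚ)^j * bernoulli j = bernoulli j := by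
      rcases Nat.even_or_odd j with he | ho
      · rw [he.neg_one_pow, one_mul]
      · rw [bernoulli_eq_bernoulli'_of_ne_one (by omega),
            bernoulli'_eq_zero_of_odd ho (by omega), mul_zero]
    calc (-1 : ℚ)^j * ((n.choose j : ℚ) - 1) * (bernoulli j / (j:ℚ)) * (m:ℚ)^(n-j)
        = ((n.choose j : ℚ) - 1) * (((-1 : ℚ)^j * bernoulli j) / (j:ℚ)) * (m:ℚ)^(n-j) := by
          ring
      _ = ((n.choose j : ℚ) - 1) * (bernoulli j / (j:ℚ)) * (m:ℚ)^(n-j) := by rw [hsign]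
  rw [Finset.sum_congr rfl htail]
  have hc1 : (n.choose 1 : ℚ) = (n : ℚ) := by
    rw [Nat.choose_one_right]
  rw [hc1, bernoulli_one]
  push_cast
  ring

theorem agoh_recurrence_alt (n m : ℕ) (hn : 1 ≤ n) (hm : 1 ≤ m) :
    ∑ j ∈ Finset.Icc 1 n,
      (-1 : ℚ) ^ j * ((n.choose j : ℚ) - 1) * (bernoulli j / (j : ℚ)) * (m : ℚ) ^ (n - j)
      = (m : ℚ) ^ n * (harmonic m - harmonic n + ((n : ℚ) - 1) / (m : ℚ))
        - ∑ j ∈ Finset.Icc 1 m, ((m - j : ℕ) : ℚ) ^ n / (j : ℚ) := by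
  have hA := A_eq n m hn
  have hT := T_eq n m hn
  have hL := lhs_eq n m hn
  have hS : ∑ j ∈ Icc 1 n, ((n.choose j : ℚ) - 1) * (bernoulli j / (j:ℚ)) * (m:ℚ)^(n-j)
      = (m:ℚ)^n * harmonic m - (∑ j ∈ Icc 1 m, ((m - j : ℕ) : ℚ)^n / (j:ℚ))
        - (m:ℚ)^n * harmonic n := by
    rw [← hA] at hT
    linarith [hT]
  rw [hL, hS]
  have hm0 : (m:ℚ) ≠ 0 := by
    have : m ≠ 0 := by omega
    exact_mod_cast this
  have hmn : (m:ℚ)^n = (m:ℚ)^(n-1) * m := by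
    conv_lhs => rw [show n = (n-1) + 1 by omega]
    rw [pow_succ]
  rw [hmn]
  field_simp
  ring
end

section
/- For every positive integer n, ∑_{j=1}^{n} (-1)^j · (C(n,j) - 1) · (B_j/j) = n − H_n. -/
open Finset

lemma sum_bern'_Icc (n : ℕ) :
    ∑ j ∈ Finset.Icc 1 n, bernoulli' j * (((n+1).choose j : ℚ)) = (n : ℚ) := by
  have h := sum_bernoulli' (n+1)
  rw [Finset.sum_range_succ'] at h
  simp only [Nat.choose_zero_right, Nat.cast_one, one_mul, bernoulli'_zero, mul_one] at h
  have h2 : ∑ j ∈ Finset.Icc 1 n, bernoulli' j * (((n+1).choose j : ℚ))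
      = ∑ i ∈ Finset.range n, ((n+1).choose (i+1) : ℚ) * bernoulli' (i+1) := by
    rw [← Finset.Ico_add_one_right_eq_Icc, Finset.sum_Ico_eq_sum_range]
    simp [mul_comm, add_comm]
  push_cast at h
  rw [h2]
  linarith

lemma per_term (n j : ℕ) (h1 : 1 ≤ j) (hj : j ≤ n) :
    (-1 : ℚ) ^ j * (((n+1).choose j : ℚ) - 1) * (bernoulli j / (j : ℚ))
      = (-1 : ℚ) ^ j * ((n.choose j : ℚ) - 1) * (bernoulli j / (j : ℚ))
        + bernoulli' j * ((n+1).choose j : ℚ) / ((n : ℚ) + 1) := by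
  obtain ⟨k, rfl⟩ := Nat.exists_eq_add_of_le' h1
  have hev : ∀ m : ℕ, (-1 : ℚ) ^ (m * 2) = 1 := fun m => Even.neg_one_pow ⟨m, by ring⟩
  have hb : bernoulli (k + 1) = (-1 : ℚ) ^ (k+1) * bernoulli' (k + 1) := by
    rw [bernoulli'_eq_bernoulli]
    ring_nf
    rw [hev, mul_one]
  have hsq : (-1 : ℚ)^(k+1) * (-1 : ℚ)^(k+1) = 1 := by
    ring_nf
    exact hev _
  have hnatN : (n+1) * n.choose k = (n+1).choose (k+1) * (k+1) := Nat.add_one_mul_choose_eq n k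
  have hnat : ((n : ℚ)+1) * (n.choose k : ℚ) = ((n+1).choose (k+1) : ℚ) * ((k:ℚ)+1) := by
    exact_mod_cast congrArg (Nat.cast : ℕ → ℚ) hnatN
  have hchoose : ((n+1).choose (k+1) : ℚ) = (n.choose (k+1) : ℚ) + (n.choose k : ℚ) := by
    rw_mod_cast [Nat.choose_succ_succ']
    push_cast; ring
  have hj0 : ((k : ℚ) + 1) ≠ 0 := by positivity
  have hn0 : ((n : ℚ) + 1) ≠ 0 := by positivity
  rw [hb]
  push_cast
  rw [show (-1 : ℚ)^(k+1) * (((n+1).choose (k+1) : ℚ) - 1) * ((-1 : ℚ)^(k+1) * bernoulli' (k+1) / ((k:ℚ)+1))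
      = ((-1 : ℚ)^(k+1) * (-1 : ℚ)^(k+1)) * ((((n+1).choose (k+1) : ℚ) - 1) * (bernoulli' (k+1) / ((k:ℚ)+1))) by ring,
    show (-1 : ℚ)^(k+1) * ((n.choose (k+1) : ℚ) - 1) * ((-1 : ℚ)^(k+1) * bernoulli' (k+1) / ((k:ℚ)+1))
      = ((-1 : ℚ)^(k+1) * (-1 : ℚ)^(k+1)) * (((n.choose (k+1) : ℚ) - 1) * (bernoulli' (k+1) / ((k:ℚ)+1))) by ring,
    hsq, one_mul, one_mul]
  field_simp
  linear_combination bernoulli' (k+1) * hnat + bernoulli' (k+1) * ((n:ℚ)+1) * hchoose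

theorem alternating_bernoulli_sum (n : ℕ) (hn : 1 ≤ n) :
    ∑ j ∈ Finset.Icc 1 n, (-1 : ℚ) ^ j * ((n.choose j : ℚ) - 1) * (bernoulli j / (j : ℚ))
      = (n : ℚ) - harmonic n := by
  induction n, hn using Nat.le_induction with
  | base => norm_num [harmonic_succ]
  | succ n hn ih =>
    rw [Finset.sum_Icc_succ_top (by omega : 1 ≤ n + 1)]
    simp only [Nat.choose_self, Nat.cast_one, sub_self, mul_zero, zero_mul, add_zero]
    have hsum : ∀ j ∈ Finset.Icc 1 n,
        (-1 : ℚ) ^ j * (((n+1).choose j : ℚ) - 1) * (bernoulli j / (j : ℚ))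
          = (-1 : ℚ) ^ j * ((n.choose j : ℚ) - 1) * (bernoulli j / (j : ℚ))
            + bernoulli' j * ((n+1).choose j : ℚ) / ((n : ℚ) + 1) := by
      intro j hj
      rw [Finset.mem_Icc] at hj
      exact per_term n j hj.1 hj.2
    push_cast
    rw [Finset.sum_congr rfl hsum, Finset.sum_add_distrib, ih, ← Finset.sum_div, sum_bern'_Icc,
      harmonic_succ]
    have hn0 : ((n : ℚ) + 1) ≠ 0 := by positivity
    push_cast
    field_simp
    ring
end

section
/- For every positive integer n, ∑_{j=1}^{n} (C(n,j) - 1) · (B_j/j) · (1 − 2^{-j}) = (1 − 2^{n-1})/2^n. -/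
open Finset

lemma key_sum (m : ℕ) (hm : 2 ≤ m) :
    ∑ j ∈ Finset.range m, (m.choose j : ℚ) * bernoulli j * (1 - ((2:ℚ)^j)⁻¹)
      = -(m : ℚ) / (2:ℚ)^m := by
  have hm0 : (m : ℚ) ≠ 0 := by positivity
  have h2m : ((2:ℚ)^m) ≠ 0 := by positivity
  have h1 : ∑ j ∈ Finset.range m, (m.choose j : ℚ) * bernoulli j = 0 := by
    rw [sum_bernoulli]
    simp [show m ≠ 1 by omega]
  have hp := sum_range_pow 2 (m - 1)
  rw [show m - 1 + 1 = m by omega] at hp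
  have hc : ((m - 1 : ℕ) : ℚ) + 1 = (m : ℚ) := by
    rw [Nat.cast_sub (by omega)]
    norm_num
  rw [hc] at hp
  have hlhs : ∑ k ∈ Finset.range 2, (k : ℚ) ^ (m-1) = 1 := by
    rw [Finset.sum_range_succ, Finset.sum_range_one]
    norm_num [zero_pow (show m - 1 ≠ 0 by omega)]
  rw [hlhs] at hp
  push_cast at hp
  have h2 : ∑ j ∈ Finset.range m, (m.choose j : ℚ) * bernoulli j * ((2:ℚ)^j)⁻¹
      = (m : ℚ) / (2:ℚ)^m := by
    calc ∑ j ∈ Finset.range m, (m.choose j : ℚ) * bernoulli j * ((2:ℚ)^j)⁻¹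
        = ∑ j ∈ Finset.range m,
            (bernoulli j * ((m.choose j : ℚ)) * (2:ℚ)^(m-j) / m) * ((m:ℚ)/(2:ℚ)^m) := by
          refine Finset.sum_congr rfl fun j hj => ?_
          have hj' : j ≤ m := le_of_lt (Finset.mem_range.mp hj)
          have h2j : ((2:ℚ)^j) ≠ 0 := by positivity
          have he : (2:ℚ)^(m-j) = (2:ℚ)^m / (2:ℚ)^j := by
            rw [eq_div_iff h2j, ← pow_add, Nat.sub_add_cancel hj']
          rw [he]
          field_simp
      _ = (∑ j ∈ Finset.range m,
            bernoulli j * ((m.choose j : ℚ)) * (2:ℚ)^(m-j) / m) * ((m:ℚ)/(2:ℚ)^m) :=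
          (Finset.sum_mul _ _ _).symm
      _ = (m : ℚ) / (2:ℚ)^m := by rw [← hp]; ring
  calc ∑ j ∈ Finset.range m, (m.choose j : ℚ) * bernoulli j * (1 - ((2:ℚ)^j)⁻¹)
      = ∑ j ∈ Finset.range m, ((m.choose j : ℚ) * bernoulli j
          - (m.choose j : ℚ) * bernoulli j * ((2:ℚ)^j)⁻¹) := by
        refine Finset.sum_congr rfl fun j _ => by ring
    _ = 0 - (m : ℚ) / (2:ℚ)^m := by rw [Finset.sum_sub_distrib, h1, h2]
    _ = -(m : ℚ) / (2:ℚ)^m := by ring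

theorem bernoulli_sum_half_powers (n : ℕ) (hn : 1 ≤ n) :
    ∑ j ∈ Finset.Icc 1 n,
      ((n.choose j : ℚ) - 1) * (bernoulli j / (j : ℚ)) * (1 - ((2 : ℚ) ^ j)⁻¹)
      = (1 - (2 : ℚ) ^ (n - 1)) / (2 : ℚ) ^ n := by
  induction n, hn using Nat.le_induction with
  | base => norm_num
  | succ n hn ih =>
    have hIcc : ∀ (m : ℕ) (f : ℕ → ℚ),
        ∑ j ∈ Finset.Icc 1 m, f j = ∑ i ∈ Finset.range m, f (1 + i) := by
      intro m f
      rw [← Finset.Ico_add_one_right_eq_Icc, Finset.sum_Ico_eq_sum_range]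
      simp
    rw [hIcc] at ih ⊢
    have hn1 : ((n:ℚ)+1) ≠ 0 := by positivity
    -- Pascal split
    have hsplit : ∀ i, (((n+1).choose (1+i) : ℚ) - 1) * (bernoulli (1+i) / ((1+i : ℕ) : ℚ))
          * (1 - ((2:ℚ)^(1+i))⁻¹)
        = ((n.choose (1+i) : ℚ) - 1) * (bernoulli (1+i) / ((1+i : ℕ) : ℚ)) * (1 - ((2:ℚ)^(1+i))⁻¹)
          + (n.choose i : ℚ) * (bernoulli (1+i) / ((1+i : ℕ) : ℚ)) * (1 - ((2:ℚ)^(1+i))⁻¹) := by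
      intro i
      have : (n+1).choose (1+i) = n.choose i + n.choose (1+i) := by
        rw [add_comm 1 i, Nat.choose_succ_succ]
      rw [this]
      push_cast
      ring
    rw [Finset.sum_congr rfl (fun i _ => hsplit i), Finset.sum_add_distrib]
    -- first sum: old sum plus top term
    have hA : ∑ i ∈ Finset.range (n+1),
        ((n.choose (1+i) : ℚ) - 1) * (bernoulli (1+i) / ((1+i : ℕ) : ℚ)) * (1 - ((2:ℚ)^(1+i))⁻¹)
        = (1 - (2:ℚ)^(n-1)) / (2:ℚ)^n
          - (bernoulli (n+1) / ((n+1 : ℕ) : ℚ)) * (1 - ((2:ℚ)^(n+1))⁻¹) := by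
      rw [Finset.sum_range_succ, ih]
      rw [show 1 + n = n + 1 by ring, Nat.choose_succ_self]
      push_cast
      ring
    -- second sum
    have hB : ∑ i ∈ Finset.range (n+1),
        (n.choose i : ℚ) * (bernoulli (1+i) / ((1+i : ℕ) : ℚ)) * (1 - ((2:ℚ)^(1+i))⁻¹)
        = -((2:ℚ)^(n+1))⁻¹ + (bernoulli (n+1) / ((n+1 : ℕ) : ℚ)) * (1 - ((2:ℚ)^(n+1))⁻¹) := by
      have hterm : ∀ i, (n.choose i : ℚ) * (bernoulli (1+i) / ((1+i : ℕ) : ℚ)) * (1 - ((2:ℚ)^(1+i))⁻¹)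
          = (((n+1).choose (1+i) : ℚ) * bernoulli (1+i) * (1 - ((2:ℚ)^(1+i))⁻¹)) / ((n:ℚ)+1) := by
        intro i
        have hc : ((n:ℚ)+1) * (n.choose i : ℚ) = ((n+1).choose (1+i) : ℚ) * ((i:ℚ)+1) := by
          have h := Nat.add_one_mul_choose_eq n i
          rw [add_comm 1 i]
          exact_mod_cast congrArg (Nat.cast : ℕ → ℚ) h
        have hi1 : ((i:ℚ)+1) ≠ 0 := by positivity
        rw [show ((1+i : ℕ) : ℚ) = (i:ℚ)+1 by push_cast; ring]
        generalize (1 - ((2:ℚ)^(1+i))⁻¹) = u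
        generalize bernoulli (1+i) = B
        field_simp
        linear_combination (B * u) * hc
      rw [Finset.sum_congr rfl (fun i _ => hterm i)]
      have hkey := key_sum (n+1) (by omega)
      have hshift : ∑ i ∈ Finset.range (n+1),
          (((n+1).choose (1+i) : ℚ) * bernoulli (1+i) * (1 - ((2:ℚ)^(1+i))⁻¹))
          = ∑ j ∈ Finset.range (n+2), (((n+1).choose j : ℚ) * bernoulli j * (1 - ((2:ℚ)^j)⁻¹)) := by
        rw [Finset.sum_range_succ'
          (fun j => ((n+1).choose j : ℚ) * bernoulli j * (1 - ((2:ℚ)^j)⁻¹)) (n+1)]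
        simp [add_comm 1]
      have htop : ∑ j ∈ Finset.range (n+2), (((n+1).choose j : ℚ) * bernoulli j * (1 - ((2:ℚ)^j)⁻¹))
          = -((n:ℚ)+1) / (2:ℚ)^(n+1) + bernoulli (n+1) * (1 - ((2:ℚ)^(n+1))⁻¹) := by
        rw [Finset.sum_range_succ, hkey, Nat.choose_self]
        push_cast
        ring
      rw [← Finset.sum_div, hshift, htop]
      have h2 : ((2:ℚ)^(n+1)) ≠ 0 := by positivity
      push_cast
      field_simp
    rw [hA, hB]
    obtain ⟨k, rfl⟩ := Nat.exists_eq_add_of_le hn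
    rw [show 1 + k + 1 - 1 = 1 + k by omega, show 1 + k - 1 = k by omega]
    have h2 : ((2:ℚ)^(1+k)) ≠ 0 := by positivity
    have h2' : ((2:ℚ)^(1+k+1)) ≠ 0 := by positivity
    field_simp
    ring
end

section
/- For every positive integer n, ∑_{j=1}^{n} (C(n,j) + 1) · (B_j/j) · (1 − 2^j) = 1. -/
open PowerSeries Finset

lemma bps_rescale_two :
    PowerSeries.rescale (2 : ℚ) (bernoulliPowerSeries ℚ) * (PowerSeries.exp ℚ + 1) =
      2 * bernoulliPowerSeries ℚ := by
  have hE : (PowerSeries.exp ℚ - 1) ≠ 0 := by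
    intro h
    have := congrArg (PowerSeries.coeff (R := ℚ) 1) h
    simp [PowerSeries.coeff_exp] at this
  apply mul_right_cancel₀ hE
  have h := bernoulliPowerSeries_mul_exp_sub_one ℚ
  have h2 := congrArg (PowerSeries.rescale (2 : ℚ)) h
  rw [map_mul, map_sub, map_one, PowerSeries.rescale_X] at h2
  have hexp : PowerSeries.rescale (2 : ℚ) (PowerSeries.exp ℚ) = PowerSeries.exp ℚ ^ 2 := by
    rw [PowerSeries.exp_pow_eq_rescale_exp]
    norm_num
  rw [hexp] at h2
  calc PowerSeries.rescale (2 : ℚ) (bernoulliPowerSeries ℚ) * (PowerSeries.exp ℚ + 1) *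
        (PowerSeries.exp ℚ - 1)
      = PowerSeries.rescale (2 : ℚ) (bernoulliPowerSeries ℚ) * (PowerSeries.exp ℚ ^ 2 - 1) := by
        ring
    _ = PowerSeries.C (2 : ℚ) * PowerSeries.X := h2
    _ = 2 * (bernoulliPowerSeries ℚ * (PowerSeries.exp ℚ - 1)) := by
        rw [h, show PowerSeries.C (2 : ℚ) = (2 : PowerSeries ℚ) from by rw [map_ofNat]]
    _ = 2 * bernoulliPowerSeries ℚ * (PowerSeries.exp ℚ - 1) := by ring

lemma sum_choose_bernoulli_two_pow (m : ℕ) :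
    ∑ j ∈ Finset.range (m + 1), (m.choose j : ℚ) * bernoulli j * 2 ^ j
      = (2 - 2 ^ m) * bernoulli m := by
  have h := congrArg (PowerSeries.coeff (R := ℚ) m) bps_rescale_two
  rw [PowerSeries.coeff_mul, Finset.Nat.sum_antidiagonal_eq_sum_range_succ_mk,
    show (2 : PowerSeries ℚ) * bernoulliPowerSeries ℚ
        = PowerSeries.C (2 : ℚ) * bernoulliPowerSeries ℚ from by rw [map_ofNat],
    PowerSeries.coeff_C_mul] at h
  simp only [bernoulliPowerSeries, PowerSeries.coeff_rescale, PowerSeries.coeff_mk,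
    map_add, PowerSeries.coeff_exp, PowerSeries.coeff_one, Algebra.algebraMap_self,
    RingHom.id_apply] at h
  have hsplit : ∑ x ∈ Finset.range (m + 1),
        (2 : ℚ) ^ x * (bernoulli x / x.factorial) *
          ((1 : ℚ) / (m - x).factorial + if m - x = 0 then 1 else 0)
      = (∑ x ∈ Finset.range (m + 1),
          (2 : ℚ) ^ x * (bernoulli x / x.factorial) * (1 / (m - x).factorial))
        + 2 ^ m * (bernoulli m / m.factorial) := by
    simp_rw [mul_add, Finset.sum_add_distrib]
    congr 1
    rw [Finset.sum_eq_single_of_mem m (Finset.self_mem_range_succ m)]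
    · simp
    · intro x hx hxm
      have : m - x ≠ 0 := by
        have := Finset.mem_range.mp hx; omega
      simp [this]
  rw [hsplit] at h
  have h' : ∑ x ∈ Finset.range (m + 1),
        (2 : ℚ) ^ x * (bernoulli x / x.factorial) * (1 / (m - x).factorial)
      = 2 * (bernoulli m / m.factorial) - 2 ^ m * (bernoulli m / m.factorial) := by
    linarith [h]
  have hm : (m.factorial : ℚ) ≠ 0 := Nat.cast_ne_zero.mpr m.factorial_ne_zero
  calc ∑ j ∈ Finset.range (m + 1), (m.choose j : ℚ) * bernoulli j * 2 ^ j
      = ∑ j ∈ Finset.range (m + 1),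
          (m.factorial : ℚ) * ((2 : ℚ) ^ j * (bernoulli j / j.factorial) *
            (1 / (m - j).factorial)) := by
        refine Finset.sum_congr rfl fun j hj => ?_
        rw [Nat.cast_choose ℚ (Nat.lt_succ_iff.mp (Finset.mem_range.mp hj))]
        have h1 : (j.factorial : ℚ) ≠ 0 := Nat.cast_ne_zero.mpr j.factorial_ne_zero
        have h2 : ((m - j).factorial : ℚ) ≠ 0 := Nat.cast_ne_zero.mpr (m - j).factorial_ne_zero
        field_simp
    _ = (m.factorial : ℚ) * ∑ x ∈ Finset.range (m + 1),
          (2 : ℚ) ^ x * (bernoulli x / x.factorial) * (1 / (m - x).factorial) := by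
        rw [Finset.mul_sum]
    _ = (m.factorial : ℚ) *
          (2 * (bernoulli m / m.factorial) - 2 ^ m * (bernoulli m / m.factorial)) := by rw [h']
    _ = (2 - 2 ^ m) * bernoulli m := by field_simp

lemma sum_choose_bernoulli_one_sub (m : ℕ) (hm : 2 ≤ m) :
    ∑ j ∈ Finset.Icc 1 m, (m.choose j : ℚ) * bernoulli j * (1 - 2 ^ j)
      = (2 ^ m - 1) * bernoulli m := by
  have hA : ∑ j ∈ Finset.range (m + 1), (m.choose j : ℚ) * bernoulli j = bernoulli m := by
    rw [Finset.sum_range_succ, sum_bernoulli, if_neg (by omega)]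
    simp
  have hB := sum_choose_bernoulli_two_pow m
  rw [show Finset.Icc 1 m = Finset.Ico 1 (m + 1) from (Finset.Ico_add_one_right_eq_Icc 1 m).symm,
    Finset.sum_Ico_eq_sub _ (by omega : 1 ≤ m + 1)]
  have hsplit : ∑ j ∈ Finset.range (m + 1), (m.choose j : ℚ) * bernoulli j * (1 - 2 ^ j)
      = (∑ j ∈ Finset.range (m + 1), (m.choose j : ℚ) * bernoulli j)
        - ∑ j ∈ Finset.range (m + 1), (m.choose j : ℚ) * bernoulli j * 2 ^ j := by
    rw [← Finset.sum_sub_distrib]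
    exact Finset.sum_congr rfl fun j _ => by ring
  rw [hsplit, hA, hB]
  simp
  ring

theorem bernoulli_recurrence (n : ℕ) (hn : 1 ≤ n) :
    ∑ j ∈ Finset.Icc 1 n,
      ((n.choose j : ℚ) + 1) * (bernoulli j / (j : ℚ)) * (1 - (2 : ℚ) ^ j) = 1 := by
  induction n, hn using Nat.le_induction with
  | base => norm_num [bernoulli_one]
  | succ n hn ih =>
    have hne : ((n : ℚ) + 1) ≠ 0 := by positivity
    have pascal : ∀ j ∈ Finset.Icc 1 (n + 1),
        (((n + 1).choose j : ℚ) + 1) * (bernoulli j / (j : ℚ)) * (1 - (2 : ℚ) ^ j)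
          = ((n.choose j : ℚ) + 1) * (bernoulli j / (j : ℚ)) * (1 - (2 : ℚ) ^ j)
            + (n.choose (j - 1) : ℚ) * (bernoulli j / (j : ℚ)) * (1 - (2 : ℚ) ^ j) := by
      intro j hj
      obtain ⟨h1, h2⟩ := Finset.mem_Icc.mp hj
      obtain ⟨k, rfl⟩ : ∃ k, j = k + 1 := ⟨j - 1, by omega⟩
      rw [Nat.choose_succ_succ']
      push_cast
      ring
    have hT : ∑ j ∈ Finset.Icc 1 (n + 1),
        (n.choose (j - 1) : ℚ) * (bernoulli j / (j : ℚ)) * (1 - (2 : ℚ) ^ j)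
          = (2 ^ (n + 1) - 1) * bernoulli (n + 1) / ((n : ℚ) + 1) := by
      have hterm : ∀ j ∈ Finset.Icc 1 (n + 1),
          (n.choose (j - 1) : ℚ) * (bernoulli j / (j : ℚ)) * (1 - (2 : ℚ) ^ j)
            = ((n + 1).choose j : ℚ) * bernoulli j * (1 - (2 : ℚ) ^ j) / ((n : ℚ) + 1) := by
        intro j hj
        obtain ⟨h1, h2⟩ := Finset.mem_Icc.mp hj
        have hjQ : (j : ℚ) ≠ 0 := by positivity
        have key : ((n : ℚ) + 1) * (n.choose (j - 1) : ℚ) = ((n + 1).choose j : ℚ) * j := by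
          obtain ⟨k, rfl⟩ : ∃ k, j = k + 1 := ⟨j - 1, by omega⟩
          exact_mod_cast congrArg (Nat.cast : ℕ → ℚ) (Nat.add_one_mul_choose_eq n k)
        field_simp
        linear_combination (bernoulli j * (1 - (2 : ℚ) ^ j)) * key
      rw [Finset.sum_congr rfl hterm, ← Finset.sum_div,
        sum_choose_bernoulli_one_sub (n + 1) (by omega)]
    calc ∑ j ∈ Finset.Icc 1 (n + 1),
          (((n + 1).choose j : ℚ) + 1) * (bernoulli j / (j : ℚ)) * (1 - (2 : ℚ) ^ j)
        = (∑ j ∈ Finset.Icc 1 (n + 1),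
            ((n.choose j : ℚ) + 1) * (bernoulli j / (j : ℚ)) * (1 - (2 : ℚ) ^ j))
          + ∑ j ∈ Finset.Icc 1 (n + 1),
            (n.choose (j - 1) : ℚ) * (bernoulli j / (j : ℚ)) * (1 - (2 : ℚ) ^ j) := by
          rw [← Finset.sum_add_distrib]
          exact Finset.sum_congr rfl pascal
      _ = (1 + (bernoulli (n + 1) / ((n : ℚ) + 1)) * (1 - (2 : ℚ) ^ (n + 1)))
          + (2 ^ (n + 1) - 1) * bernoulli (n + 1) / ((n : ℚ) + 1) := by
          rw [hT, Finset.sum_Icc_succ_top (by omega : 1 ≤ n + 1), ih,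
            Nat.choose_succ_self]
          push_cast
          ring
      _ = 1 := by field_simp; ring
end

section
/- For every positive integer n, ∑_{j=1}^{n} (C(n,j) + 1) · E_{j-1} = 2, where for m ≥ 0 we set E_m = 2 · (1 − 2^{m+1}) · B_{m+1}/(m+1). -/
/-- The Euler numbers `E m = E_m(0)`, via the closed form
`E_m = 2 (1 - 2^(m+1)) B_(m+1) / (m+1)`. -/
def eulerNumber (m : ℕ) : ℚ := 2 * (1 - (2 : ℚ) ^ (m + 1)) * bernoulli (m + 1) / ((m : ℚ) + 1)

open PowerSeries Finset Nat

lemma two_eq_C : (2 : ℚ⟦X⟧) = PowerSeries.C 2 := by simp [map_ofNat]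

lemma exp_sub_one_ne_zero : exp ℚ - 1 ≠ 0 := by
  intro h
  have := congrArg (PowerSeries.coeff 1) h
  simp [coeff_exp] at this

lemma ps_key : exp ℚ * rescale (2:ℚ) (bernoulliPowerSeries ℚ)
    = 2 * bernoulliPowerSeries ℚ - rescale (2:ℚ) (bernoulliPowerSeries ℚ) := by
  have h1 : bernoulliPowerSeries ℚ * (exp ℚ - 1) = X := bernoulliPowerSeries_mul_exp_sub_one ℚ
  have h2 : rescale (2:ℚ) (bernoulliPowerSeries ℚ) * (exp ℚ * exp ℚ - 1) = 2 * X := by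
    have h3 := congrArg (rescale (2:ℚ)) h1
    rw [map_mul, map_sub, map_one] at h3
    have h4 : rescale ((2:ℕ):ℚ) (exp ℚ) = exp ℚ * exp ℚ := by
      rw [← exp_pow_eq_rescale_exp]; ring
    have h5 : rescale (2:ℚ) (X : ℚ⟦X⟧) = 2 * X := by
      ext n
      rw [two_eq_C, mul_comm, coeff_rescale, coeff_mul_C, coeff_X]
      rcases eq_or_ne n 1 with rfl | hne
      · simp
      · simp [hne]
    push_cast at h4
    rw [h4, h5] at h3
    exact h3
  apply mul_right_cancel₀ exp_sub_one_ne_zero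
  linear_combination h2 - 2 * h1

lemma sum_choose_two_pow_bernoulli (N : ℕ) :
    ∑ j ∈ range (N+1), (N.choose j : ℚ) * 2^j * bernoulli j = (2 - 2^N) * bernoulli N := by
  have hc := congrArg (PowerSeries.coeff N) ps_key
  rw [coeff_mul, map_sub, two_eq_C, coeff_C_mul] at hc
  simp only [coeff_rescale, bernoulliPowerSeries, coeff_mk, coeff_exp,
    Algebra.algebraMap_self, RingHom.id_apply] at hc
  rw [Finset.Nat.sum_antidiagonal_eq_sum_range_succ_mk] at hc
  rw [← Finset.sum_range_reflect]
  have key : ∀ k ∈ range (N+1),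
      (N.choose (N+1-1-k) : ℚ) * 2^(N+1-1-k) * bernoulli (N+1-1-k)
      = (N ! : ℚ) * ((1/(k ! : ℚ)) * (2^(N-k) * (bernoulli (N-k) / ((N-k)! : ℚ)))) := by
    intro k hk
    rw [mem_range] at hk
    have hk' : k ≤ N := by omega
    have h1 : N+1-1-k = N-k := by omega
    have h2 : N - (N - k) = k := by omega
    rw [h1, Nat.cast_choose ℚ (Nat.sub_le N k), h2]
    have f1 : ((N-k)! : ℚ) ≠ 0 := by exact_mod_cast (N-k).factorial_ne_zero
    have f2 : ((k)! : ℚ) ≠ 0 := by exact_mod_cast k.factorial_ne_zero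
    field_simp
  rw [Finset.sum_congr rfl key, ← Finset.mul_sum]
  rw [show range N.succ = range (N+1) from rfl] at hc
  rw [hc]
  have hfac : (N ! : ℚ) ≠ 0 := by exact_mod_cast N.factorial_ne_zero
  field_simp

lemma sum_choose_euler (m : ℕ) (hm : 1 ≤ m) :
    ∑ k ∈ range (m+1), (m.choose k : ℚ) * eulerNumber k = - eulerNumber m := by
  have hm1 : ((m : ℚ) + 1) ≠ 0 := by positivity
  apply mul_left_cancel₀ hm1
  rw [Finset.mul_sum]
  have key : ∀ k ∈ range (m+1),
      ((m : ℚ)+1) * ((m.choose k : ℚ) * eulerNumber k)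
      = ((m+1).choose (k+1) : ℚ) * (2 * (1 - 2^(k+1)) * bernoulli (k+1)) := by
    intro k hk
    have hch : (m+1) * m.choose k = (m+1).choose (k+1) * (k+1) := Nat.add_one_mul_choose_eq m k
    have hchq : ((m : ℚ)+1) * (m.choose k : ℚ) = ((m+1).choose (k+1) : ℚ) * ((k : ℚ)+1) := by
      exact_mod_cast congrArg (fun x : ℕ => (x : ℚ)) hch
    have hk1 : ((k : ℚ) + 1) ≠ 0 := by positivity
    rw [eulerNumber]
    field_simp
    linear_combination ((1 - 2^(k+1)) * bernoulli (k+1)) * hchq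
  rw [Finset.sum_congr rfl key]
  have hre := Finset.sum_range_succ' (fun j => ((m+1).choose j : ℚ) * (2 * (1 - 2^j) * bernoulli j)) (m+1)
  simp only [choose_zero_right, cast_one, pow_zero, sub_self, mul_zero, zero_mul, mul_one, add_zero] at hre
  rw [← hre]
  have e1 : ∑ j ∈ range (m+2), ((m+1).choose j : ℚ) * (2 * (1 - 2^j) * bernoulli j)
      = 2 * ((∑ j ∈ range (m+2), ((m+1).choose j : ℚ) * bernoulli j)
          - ∑ j ∈ range (m+2), ((m+1).choose j : ℚ) * 2^j * bernoulli j) := by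
    rw [mul_sub, Finset.mul_sum, Finset.mul_sum, ← Finset.sum_sub_distrib]
    exact Finset.sum_congr rfl fun j _ => by ring
  rw [e1]
  have e2 : ∑ j ∈ range (m+2), ((m+1).choose j : ℚ) * bernoulli j = bernoulli (m+1) := by
    rw [show m+2 = (m+1)+1 from rfl, Finset.sum_range_succ, sum_bernoulli (m+1),
      if_neg (by omega), Nat.choose_self]
    simp
  rw [e2, sum_choose_two_pow_bernoulli (m+1), eulerNumber]
  field_simp
  ring

lemma range_version (n : ℕ) (hn : 1 ≤ n) :
    ∑ k ∈ range n, ((n.choose (k+1) : ℚ) + 1) * eulerNumber k = 2 := by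
  induction n, hn using Nat.le_induction with
  | base => norm_num [eulerNumber]
  | succ n hn ih =>
    have step : ∀ k ∈ range (n+1),
        (((n+1).choose (k+1) : ℚ) + 1) * eulerNumber k
        = ((n.choose (k+1) : ℚ) + 1) * eulerNumber k + (n.choose k : ℚ) * eulerNumber k := by
      intro k _
      rw [Nat.choose_succ_succ n k]
      push_cast
      ring
    rw [Finset.sum_congr rfl step, Finset.sum_add_distrib, sum_choose_euler n hn,
      Finset.sum_range_succ, ih, Nat.choose_succ_self]
    push_cast
    ring

theorem euler_number_recurrence (n : ℕ) (hn : 1 ≤ n) :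
    ∑ j ∈ Finset.Icc 1 n, ((n.choose j : ℚ) + 1) * eulerNumber (j - 1) = 2 := by
  rw [← Finset.Ico_add_one_right_eq_Icc, Finset.sum_Ico_eq_sum_range]
  simp only [Nat.add_sub_cancel]
  rw [← range_version n hn]
  exact Finset.sum_congr rfl fun k _ => by rw [Nat.add_comm 1 k, Nat.add_sub_cancel]
end

section
/- For every real number t with |t| < 1, ∑_{k=1}^{∞} (H_k)^2 · t^k = (∑_{n=1}^{∞} t^n/n^2)/(1−t) + (log(1−t))^2/(1−t), where both series converge. -/
open Finset Real

/-- `H_n ≤ n` is not needed; instead we use norm bounds directly. -/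

private lemma hh_sq_sum (n : ℕ) :
    ∑ i ∈ range (n + 1),
      (2 * ((harmonic i : ℚ) : ℝ) / i - 1 / (i : ℝ) ^ 2) = ((harmonic n : ℚ) : ℝ) ^ 2 := by
  induction n with
  | zero => simp [harmonic]
  | succ n ih =>
      rw [Finset.sum_range_succ, ih, harmonic_succ]
      push_cast
      have h : ((n : ℝ) + 1) ≠ 0 := by positivity
      field_simp
      ring

private lemma ico_inv_sum (n : ℕ) :
    ∑ i ∈ Ico 1 (n + 1), (1 / (i : ℝ)) = ((harmonic (n) : ℚ) : ℝ) := by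
  rw [Finset.sum_Ico_eq_sum_range]
  simp only [Nat.add_sub_cancel]
  rw [harmonic]
  push_cast
  refine Finset.sum_congr rfl fun i _ => ?_
  rw [one_div]
  congr 1
  ring

private lemma ico_inv_sum_reflect (n : ℕ) :
    ∑ i ∈ Ico 1 (n + 1), (1 / ((n + 1 - i : ℕ) : ℝ)) = ((harmonic n : ℚ) : ℝ) := by
  rw [← ico_inv_sum n]
  apply Finset.sum_nbij' (fun i => n + 1 - i) (fun j => n + 1 - j)
  · intro a ha; simp only [Finset.mem_Ico] at *; omega
  · intro a ha; simp only [Finset.mem_Ico] at *; omega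
  · intro a ha; simp only [Finset.mem_Ico] at ha; omega
  · intro a ha; simp only [Finset.mem_Ico] at ha; omega
  · intro a ha; simp only [Finset.mem_Ico] at ha
    congr 2 <;> omega

/-- Cauchy square coefficients of `-log(1-t)`. -/
private lemma cauchy_log_coeff (t : ℝ) (n : ℕ) :
    ∑ kl ∈ Finset.HasAntidiagonal.antidiagonal n, (t ^ kl.1 / kl.1) * (t ^ kl.2 / kl.2)
      = t ^ n * (2 * ((harmonic n : ℚ) : ℝ) / n - 2 / (n : ℝ) ^ 2) := by
  rw [Finset.Nat.sum_antidiagonal_eq_sum_range_succ_mk]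
  match n with
  | 0 => simp
  | (m + 1) =>
    set n := m + 1 with hn
    have key : ∀ i ∈ Ico 1 n,
        (t ^ i / i) * (t ^ (n - i) / ((n - i : ℕ) : ℝ))
          = t ^ n * ((1 / n) * (1 / (i : ℝ) + 1 / ((n - i : ℕ) : ℝ))) := by
      intro i hi
      simp only [Finset.mem_Ico] at hi
      have h1 : (1 : ℕ) ≤ i := hi.1
      have h2 : i < n := hi.2
      have hpow : t ^ i * t ^ (n - i) = t ^ n := by
        rw [← pow_add]; congr 1; omega
      have hi0 : (i : ℝ) ≠ 0 := by positivity
      have hni0 : ((n - i : ℕ) : ℝ) ≠ 0 := by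
        have : 0 < n - i := by omega
        positivity
      have hir : (i : ℝ) + ((n - i : ℕ) : ℝ) = (n : ℝ) := by
        push_cast [Nat.cast_sub (le_of_lt h2)]; ring
      have hn0 : (n : ℝ) ≠ 0 := by positivity
      field_simp
      rw [hpow, ← hir]
      ring
    -- the sum over range (n+1): endpoints vanish
    have hsum : ∑ k ∈ range (n + 1), (t ^ k / k) * (t ^ (n - k) / ((n - k : ℕ) : ℝ))
        = ∑ i ∈ Ico 1 n, (t ^ i / i) * (t ^ (n - i) / ((n - i : ℕ) : ℝ)) := by
      rw [Finset.range_eq_Ico, Finset.sum_Ico_succ_top (by omega)]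
      rw [show ((n - n : ℕ) : ℝ) = 0 by simp]
      rw [Finset.sum_eq_sum_Ico_succ_bot (by omega)]
      simp
    rw [hsum]
    rw [Finset.sum_congr rfl key, ← Finset.mul_sum]
    have hm : n = m + 1 := hn
    have hsplit : ∑ i ∈ Ico 1 n, ((1 / (n:ℝ)) * (1 / (i : ℝ) + 1 / ((n - i : ℕ) : ℝ)))
        = (1 / (n:ℝ)) * (((harmonic m : ℚ) : ℝ) + ((harmonic m : ℚ) : ℝ)) := by
      rw [← Finset.mul_sum, Finset.sum_add_distrib]
      rw [show n = m + 1 from hn] at *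
      rw [ico_inv_sum m, ico_inv_sum_reflect m]
    rw [hsplit]
    have hmh : ((harmonic n : ℚ) : ℝ) = ((harmonic m : ℚ) : ℝ) + 1 / (n : ℝ) := by
      rw [hm, harmonic_succ]; push_cast; ring
    rw [hmh]
    have hn0 : (n : ℝ) ≠ 0 := by positivity
    field_simp
    ring

theorem harmonic_squared_generating_function (t : ℝ) (ht : |t| < 1) :
    ∃ L : ℝ,
      HasSum (fun n : ℕ => t ^ (n + 1) / ((n : ℝ) + 1) ^ 2) L ∧
      HasSum (fun k : ℕ => ((harmonic (k + 1) : ℚ) : ℝ) ^ 2 * t ^ (k + 1))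
        (L / (1 - t) + (Real.log (1 - t)) ^ 2 / (1 - t)) := by
  have htgeom : Summable fun n : ℕ => |t| ^ n := summable_geometric_of_lt_one (abs_nonneg t) ht
  set g : ℕ → ℝ := fun n => t ^ n / n with hgdef
  set f : ℕ → ℝ := fun n => t ^ n / (n : ℝ) ^ 2 with hfdef
  -- norm bounds
  have hgnorm : Summable fun n => ‖g n‖ := by
    apply Summable.of_nonneg_of_le (fun n => norm_nonneg _) _ htgeom
    intro n
    simp only [hgdef, Real.norm_eq_abs, abs_div, abs_pow, Nat.abs_cast]
    match n with
    | 0 => simp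
    | (m+1) =>
      apply div_le_self (by positivity)
      push_cast
      have := Nat.cast_nonneg (α := ℝ) m
      linarith
  have hfnorm : Summable fun n => ‖f n‖ := by
    apply Summable.of_nonneg_of_le (fun n => norm_nonneg _) _ htgeom
    intro n
    simp only [hfdef, Real.norm_eq_abs, abs_div, abs_pow, sq_abs, Nat.abs_cast]
    match n with
    | 0 => simp
    | (m+1) =>
      apply div_le_self (by positivity)
      push_cast
      have := Nat.cast_nonneg (α := ℝ) m
      nlinarith
  have hfsummable : Summable f := hfnorm.of_norm
  set L : ℝ := ∑' n, f n with hL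
  have hf : HasSum f L := hfsummable.hasSum
  -- log series
  have hg : HasSum g (-Real.log (1 - t)) := by
    have h0 := Real.hasSum_pow_div_log_of_abs_lt_one ht
    have h1 : HasSum (fun n : ℕ => g (n + 1)) (-Real.log (1 - t)) := by
      refine h0.congr_fun fun n => ?_
      simp only [hgdef]; push_cast; ring_nf
    rw [hasSum_nat_add_iff 1] at h1
    simpa [hgdef] using h1
  -- Cauchy square of g
  set c : ℕ → ℝ := fun n => ∑ kl ∈ Finset.HasAntidiagonal.antidiagonal n, g kl.1 * g kl.2 with hcdef
  have hcnorm : Summable fun n => ‖c n‖ :=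
    summable_norm_sum_mul_antidiagonal_of_summable_norm hgnorm hgnorm
  have hcsummable : Summable c := hcnorm.of_norm
  have htsum : ((∑' n, g n) * ∑' n, g n) = ∑' n, c n :=
    tsum_mul_tsum_eq_tsum_sum_antidiagonal_of_summable_norm hgnorm hgnorm
  have hc : HasSum c ((Real.log (1 - t)) ^ 2) := by
    have h2 := hcsummable.hasSum
    rw [← htsum, hg.tsum_eq] at h2
    convert h2 using 1
    ring
  -- A := f + c
  set A : ℕ → ℝ := fun n => f n + c n with hAdef
  have hA : HasSum A (L + (Real.log (1 - t)) ^ 2) := hf.add hc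
  have hAnorm : Summable fun n => ‖A n‖ := by
    apply Summable.of_nonneg_of_le (fun n => norm_nonneg _) _ (hfnorm.add hcnorm)
    intro n
    exact norm_add_le _ _
  -- geometric series
  have hgeo : HasSum (fun n : ℕ => t ^ n) (1 - t)⁻¹ := hasSum_geometric_of_abs_lt_one ht
  have hgeonorm : Summable fun n : ℕ => ‖t ^ n‖ := by
    simpa [Real.norm_eq_abs, abs_pow] using htgeom
  -- final Cauchy product
  set B : ℕ → ℝ := fun n => ∑ kl ∈ Finset.HasAntidiagonal.antidiagonal n, A kl.1 * t ^ kl.2 with hBdef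
  have hBnorm : Summable fun n => ‖B n‖ :=
    summable_norm_sum_mul_antidiagonal_of_summable_norm hAnorm hgeonorm
  have hBsummable : Summable B := hBnorm.of_norm
  have htsum2 : ((∑' n, A n) * ∑' n, t ^ n) = ∑' n, B n :=
    tsum_mul_tsum_eq_tsum_sum_antidiagonal_of_summable_norm hAnorm hgeonorm
  have hB : HasSum B ((L + (Real.log (1 - t)) ^ 2) * (1 - t)⁻¹) := by
    have h2 := hBsummable.hasSum
    rw [← htsum2, hA.tsum_eq, hgeo.tsum_eq] at h2
    exact h2
  -- identify B n with H_n^2 t^n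
  have hAw : ∀ n : ℕ, A n = t ^ n * (2 * ((harmonic n : ℚ) : ℝ) / n - 1 / (n : ℝ) ^ 2) := by
    intro n
    simp only [hAdef, hcdef, hfdef, hgdef]
    rw [cauchy_log_coeff t n]
    match n with
    | 0 => simp
    | (m+1) =>
      have h0 : ((m:ℝ)+1) ≠ 0 := by positivity
      push_cast
      field_simp
      ring
  have hBval : ∀ n : ℕ, B n = ((harmonic n : ℚ) : ℝ) ^ 2 * t ^ n := by
    intro n
    simp only [hBdef]
    rw [Finset.Nat.sum_antidiagonal_eq_sum_range_succ_mk]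
    calc ∑ k ∈ range (n + 1), A k * t ^ (n - k)
        = ∑ k ∈ range (n + 1),
            t ^ n * (2 * ((harmonic k : ℚ) : ℝ) / k - 1 / (k : ℝ) ^ 2) := by
          refine Finset.sum_congr rfl fun k hk => ?_
          simp only [Finset.mem_range] at hk
          rw [hAw k]
          have : t ^ k * t ^ (n - k) = t ^ n := by
            rw [← pow_add]; congr 1; omega
          rw [mul_comm (t ^ k) _, mul_assoc, this]
          ring
      _ = t ^ n * ∑ k ∈ range (n + 1),
            (2 * ((harmonic k : ℚ) : ℝ) / k - 1 / (k : ℝ) ^ 2) := by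
          rw [Finset.mul_sum]
      _ = ((harmonic n : ℚ) : ℝ) ^ 2 * t ^ n := by rw [hh_sq_sum n]; ring
  have hB' : HasSum (fun n : ℕ => ((harmonic n : ℚ) : ℝ) ^ 2 * t ^ n)
      (L / (1 - t) + (Real.log (1 - t)) ^ 2 / (1 - t)) := by
    have := hB.congr_fun fun n => (hBval n).symm
    convert this using 1
    rw [div_eq_mul_inv, div_eq_mul_inv]
    ring
  refine ⟨L, ?_, ?_⟩
  · have h1 : HasSum (fun n : ℕ => f (n + 1)) L := by
      rw [hasSum_nat_add_iff 1]
      simpa [hfdef] using hf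
    refine h1.congr_fun fun n => ?_
    simp only [hfdef]; push_cast; ring_nf
  · exact (hasSum_nat_add_iff (f := fun n : ℕ => ((harmonic n : ℚ) : ℝ) ^ 2 * t ^ n) 1).mpr
      (by simpa [harmonic] using hB')
end

section
/- For every odd prime p, the rational number (∑_{j=0}^{p} p · B_j) + 1 is p times a rational number whose denominator is not divisible by p; that is, ∑_{j=0}^{p} p B_j ≡ -1 (mod p) in the ring of p-integral rationals. -/
open Finset

namespace BernoulliSumAux

variable {p : ℕ}

lemma pint_add (hp : p.Prime) {a b : ℚ} (ha : ¬ p ∣ a.den) (hb : ¬ p ∣ b.den) :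
    ¬ p ∣ (a + b).den := fun h => by
  rcases (Nat.Prime.dvd_mul hp).1 (h.trans (Rat.add_den_dvd a b)) with h' | h'
  exacts [ha h', hb h']

lemma pint_mul (hp : p.Prime) {a b : ℚ} (ha : ¬ p ∣ a.den) (hb : ¬ p ∣ b.den) :
    ¬ p ∣ (a * b).den := fun h => by
  rcases (Nat.Prime.dvd_mul hp).1 (h.trans (Rat.mul_den_dvd a b)) with h' | h'
  exacts [ha h', hb h']

lemma pint_natCast (hp : p.Prime) (n : ℕ) : ¬ p ∣ ((n : ℚ)).den := by
  rw [Rat.den_natCast, Nat.dvd_one]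
  exact hp.ne_one

lemma pint_neg (hp : p.Prime) {a : ℚ} (ha : ¬ p ∣ a.den) : ¬ p ∣ (-a).den := by
  rwa [Rat.den_neg_eq_den]

lemma pint_inv_nat (hp : p.Prime) {n : ℕ} (h : ¬ p ∣ n) : ¬ p ∣ ((1 : ℚ) / (n : ℚ)).den := by
  intro hd
  apply h
  have h1 := Rat.den_dvd 1 (n : ℤ)
  rw [Rat.divInt_eq_div] at h1
  push_cast at h1
  have : ((1 : ℚ) / (n : ℚ)).den ∣ n := by exact_mod_cast h1
  exact hd.trans this

lemma pint_nat_sum (hp : p.Prime) (s : Finset ℕ) (m : ℕ) :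
    ¬ p ∣ (∑ k ∈ s, (k : ℚ) ^ m).den := by
  have : (∑ k ∈ s, (k : ℚ) ^ m) = ((∑ k ∈ s, k ^ m : ℕ) : ℚ) := by push_cast; ring
  rw [this]
  exact pint_natCast hp _

lemma dvd_sum_aux (hp : p.Prime) {s : Finset ℕ} {f : ℕ → ℚ}
    (h : ∀ i ∈ s, ∃ u : ℚ, ¬ p ∣ u.den ∧ f i = (p : ℚ) * u) :
    ∃ T : ℚ, ¬ p ∣ T.den ∧ ∑ i ∈ s, f i = (p : ℚ) * T := by
  classical
  induction s using Finset.cons_induction with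
  | empty =>
    refine ⟨0, ?_, by simp⟩
    show ¬ p ∣ (0 : ℚ).den
    rw [Rat.den_ofNat, Nat.dvd_one]
    exact hp.ne_one
  | cons a s ha ih =>
    obtain ⟨u, hu, hfu⟩ := h a (Finset.mem_cons_self a s)
    obtain ⟨T, hT, hfT⟩ := ih fun i hi => h i (Finset.mem_cons_of_mem hi)
    exact ⟨u + T, pint_add hp hu hT, by rw [Finset.sum_cons, hfu, hfT]; ring⟩

lemma choose_id (m i : ℕ) (h : i ≤ m) :
    (m + 1) * m.choose i = (m + 1).choose i * (m + 1 - i) := by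
  have h1 : m.choose i = m.choose (m - i) := (Nat.choose_symm h).symm
  rw [h1, Nat.add_one_mul_choose_eq]
  have h2 : m - i + 1 = m + 1 - i := by omega
  rw [h2, Nat.choose_symm (by omega : i ≤ m + 1)]

lemma key (hp : p.Prime) (hodd : Odd p) :
    ∀ m, m ≤ p → ∃ t : ℚ, ¬ p ∣ t.den ∧
      (p : ℚ) * bernoulli m = (∑ k ∈ Finset.range p, (k : ℚ) ^ m) + (p : ℚ) * t := by
  have hp3 : 3 ≤ p := by
    have h2 := hp.two_le
    have : p ≠ 2 := by rintro rfl; exact (Nat.not_odd_iff_even.mpr even_two) hodd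
    omega
  intro m
  induction m using Nat.strong_induction_on with
  | _ m ih =>
    intro hm
    have faul := sum_range_pow p m
    rw [Finset.sum_range_succ] at faul
    have hm1 : (m : ℚ) + 1 ≠ 0 := by positivity
    have hlast : bernoulli m * ((m + 1).choose m : ℚ) * (p : ℚ) ^ (m + 1 - m) / ((m : ℚ) + 1)
        = (p : ℚ) * bernoulli m := by
      have e1 : m + 1 - m = 1 := by omega
      rw [e1, Nat.choose_succ_self_right]
      field_simp
      push_cast
      ring
    -- handle each term of the remaining sum
    have hterm : ∀ i ∈ Finset.range m, ∃ u : ℚ, ¬ p ∣ u.den ∧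
        bernoulli i * ((m + 1).choose i : ℚ) * (p : ℚ) ^ (m + 1 - i) / ((m : ℚ) + 1)
          = (p : ℚ) * u := by
      intro i hi
      have him : i < m := Finset.mem_range.1 hi
      obtain ⟨t, ht, hb⟩ := ih i him (by omega)
      have hpbint : ¬ p ∣ ((p : ℚ) * bernoulli i).den := by
        rw [hb]
        exact pint_add hp (pint_nat_sum hp _ _) (pint_mul hp (pint_natCast hp p) ht)
      have hd0 : ((m + 1 - i : ℕ) : ℚ) ≠ 0 := by
        have : 0 < m + 1 - i := by omega
        exact_mod_cast this.ne'
      have hrw : bernoulli i * ((m + 1).choose i : ℚ) * (p : ℚ) ^ (m + 1 - i) / ((m : ℚ) + 1)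
          = ((p : ℚ) * bernoulli i) * (m.choose i : ℚ) * (p : ℚ) ^ (m - i)
              / ((m + 1 - i : ℕ) : ℚ) := by
        have hcid : ((m + 1) * m.choose i : ℚ) = ((m + 1).choose i : ℚ) * ((m + 1 - i : ℕ) : ℚ) := by
          exact_mod_cast congrArg (Nat.cast : ℕ → ℚ) (choose_id m i him.le)
        have hpow : (p : ℚ) ^ (m + 1 - i) = (p : ℚ) * (p : ℚ) ^ (m - i) := by
          have : m + 1 - i = (m - i) + 1 := by omega
          rw [this, pow_succ]; ring
        rw [hpow, div_eq_div_iff hm1 hd0]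
        linear_combination (-(bernoulli i * (p : ℚ) * (p : ℚ) ^ (m - i))) * hcid
      rw [hrw]
      by_cases hdvd : p ∣ (m + 1 - i)
      · -- then m + 1 - i = p
        have hle : m + 1 - i ≤ p + 1 := by omega
        have hge : p ≤ m + 1 - i := Nat.le_of_dvd (by omega) hdvd
        have heq : m + 1 - i = p := by
          rcases Nat.lt_or_ge (m + 1 - i) (p + 1) with h' | h'
          · omega
          · exfalso
            have : m + 1 - i = p + 1 := by omega
            rw [this] at hdvd
            have : p ∣ 1 := (Nat.dvd_add_right (dvd_refl p)).mp hdvd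
            exact hp.ne_one (Nat.dvd_one.mp this)
        refine ⟨(p : ℚ) * bernoulli i * (m.choose i : ℚ) * (p : ℚ) ^ (p - 3), ?_, ?_⟩
        · exact pint_mul hp (pint_mul hp hpbint (pint_natCast hp _))
            (by rw [← Nat.cast_pow]; exact pint_natCast hp _)
        · have hmi : m - i = p - 1 := by omega
          have hps : p - 1 = (p - 3) + 1 + 1 := by omega
          rw [hmi, heq, hps, pow_succ, pow_succ]
          have hpne : (p : ℚ) ≠ 0 := by
            exact_mod_cast (by omega : p ≠ 0)
          field_simp
      · refine ⟨(p : ℚ) * bernoulli i * (m.choose i : ℚ) * (p : ℚ) ^ (m - i - 1)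
            / ((m + 1 - i : ℕ) : ℚ), ?_, ?_⟩
        · rw [div_eq_mul_one_div]
          exact pint_mul hp (pint_mul hp (pint_mul hp hpbint (pint_natCast hp _))
            (by rw [← Nat.cast_pow]; exact pint_natCast hp _)) (pint_inv_nat hp hdvd)
        · have hpow : (p : ℚ) ^ (m - i) = (p : ℚ) * (p : ℚ) ^ (m - i - 1) := by
            have h' := pow_succ (p : ℚ) (m - i - 1)
            rw [show m - i - 1 + 1 = m - i from by omega] at h'
            rw [h']; ring
          rw [hpow]
          ring
    obtain ⟨T, hT, hsumT⟩ := dvd_sum_aux hp hterm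
    refine ⟨-T, pint_neg hp hT, ?_⟩
    rw [faul, hlast, hsumT]
    ring

lemma sum_field_pow {K : Type*} [Field K] [Fintype K] [DecidableEq K] {j : ℕ} (hj : j ≠ 0) :
    ∑ x : K, x ^ j = if Fintype.card K - 1 ∣ j then -1 else 0 := by
  let φ : Kˣ ↪ K := ⟨fun x ↦ x, fun _ _ h => Units.ext h⟩
  have h1 : univ.map φ = univ \ {0} := by
    ext x
    simp only [Finset.mem_map, mem_univ, Function.Embedding.coeFn_mk, true_and, Finset.mem_sdiff,
      Finset.mem_singleton, φ]
    exact isUnit_iff_ne_zero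
  calc
    ∑ x : K, x ^ j = ∑ x ∈ univ \ {(0 : K)}, x ^ j := by
      rw [← Finset.sum_sdiff (Finset.subset_univ {0}), Finset.sum_singleton, zero_pow hj, add_zero]
    _ = ∑ x : Kˣ, (x : K) ^ j := by
      rw [← h1, Finset.sum_map]
      rfl
    _ = _ := FiniteField.sum_pow_units K j

lemma inner_sum [Fact p.Prime] (j : ℕ) :
    ∑ k ∈ Finset.range p, ((k : ZMod p)) ^ j = ∑ x : ZMod p, x ^ j := by
  have hp := (Fact.out : p.Prime)
  refine Finset.sum_nbij' (fun k => (k : ZMod p)) (fun x => x.val) ?_ ?_ ?_ ?_ ?_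
  · intro a _; exact Finset.mem_univ _
  · intro x _; exact Finset.mem_range.2 (ZMod.val_lt x)
  · intro a ha; exact ZMod.val_cast_of_lt (Finset.mem_range.1 ha)
  · intro x _; exact ZMod.natCast_rightInverse x
  · intro a _; rfl

lemma zmod_sum [Fact p.Prime] (hodd : Odd p) :
    ((∑ j ∈ Finset.range (p + 1), ∑ k ∈ Finset.range p, k ^ j : ℕ) : ZMod p) = -1 := by
  have hp := (Fact.out : p.Prime)
  have hp3 : 3 ≤ p := by
    have h2 := hp.two_le
    have : p ≠ 2 := by rintro rfl; exact (Nat.not_odd_iff_even.mpr even_two) hodd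
    omega
  push_cast
  have hcard : Fintype.card (ZMod p) = p := ZMod.card p
  simp_rw [inner_sum]
  rw [Finset.sum_eq_single (p - 1)]
  · rw [sum_field_pow (by omega : p - 1 ≠ 0), hcard, if_pos dvd_rfl]
  · intro j hj hne
    rcases Nat.eq_zero_or_pos j with rfl | hj0
    · simp only [pow_zero, Finset.sum_const, Finset.card_univ, hcard, nsmul_eq_mul, mul_one]
      exact ZMod.natCast_self p
    · rw [sum_field_pow hj0.ne', hcard, if_neg]
      intro hdvd
      have hge : p - 1 ≤ j := Nat.le_of_dvd hj0 hdvd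
      have hlt : j < p + 1 := Finset.mem_range.1 hj
      have hjp : j = p := by omega
      rw [hjp] at hdvd
      have h1 : p - 1 ∣ p - (p - 1) := Nat.dvd_sub hdvd dvd_rfl
      have h2 : p - (p - 1) = 1 := by omega
      rw [h2, Nat.dvd_one] at h1
      omega
  · intro h
    exact absurd (Finset.mem_range.2 (by omega)) h

end BernoulliSumAux

open BernoulliSumAux in
theorem bernoulli_sum_congruence (p : ℕ) (hp : p.Prime) (hodd : Odd p) :
    ∃ t : ℚ, ¬ (p ∣ t.den) ∧
      (∑ j ∈ Finset.range (p + 1), (p : ℚ) * bernoulli j) + 1 = (p : ℚ) * t := by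
  obtain ⟨T, hT, hsum⟩ := dvd_sum_aux hp
    (s := Finset.range (p + 1))
    (f := fun j => (p : ℚ) * bernoulli j - ∑ k ∈ Finset.range p, (k : ℚ) ^ j)
    (fun j hj => by
      obtain ⟨t, ht, h⟩ := key hp hodd j (Nat.lt_succ_iff.mp (Finset.mem_range.1 hj))
      exact ⟨t, ht, by
        show (p : ℚ) * bernoulli j - (∑ k ∈ Finset.range p, (k : ℚ) ^ j) = (p : ℚ) * t
        rw [h]; ring⟩)
  have hsplit : (∑ j ∈ Finset.range (p + 1), (p : ℚ) * bernoulli j)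
      = ((∑ j ∈ Finset.range (p + 1), ∑ k ∈ Finset.range p, k ^ j : ℕ) : ℚ) + (p : ℚ) * T := by
    rw [← hsum, Finset.sum_sub_distrib]
    push_cast
    ring
  set N := ∑ j ∈ Finset.range (p + 1), ∑ k ∈ Finset.range p, k ^ j with hN
  have hzd : p ∣ N + 1 := by
    haveI := Fact.mk hp
    have h1 := zmod_sum (p := p) hodd
    have h2 : ((N + 1 : ℕ) : ZMod p) = 0 := by push_cast [← hN] at h1 ⊢; rw [h1]; ring
    exact (ZMod.natCast_eq_zero_iff _ _).1 h2
  obtain ⟨z, hz⟩ := hzd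
  refine ⟨(z : ℚ) + T, pint_add hp (pint_natCast hp z) hT, ?_⟩
  rw [hsplit]
  have hcast : (N : ℚ) + 1 = (p : ℚ) * (z : ℚ) := by exact_mod_cast congrArg (Nat.cast : ℕ → ℚ) hz
  rw [mul_add, ← hcast]
  ring
end

section
/- For every odd prime p, the rational number (∑_{j=0}^{p} p · B_j) − (p−1)! equals p^2 times a rational number whose denominator is not divisible by p; that is, ∑_{j=0}^{p} p B_j ≡ (p−1)! (mod p^2) in the ring of p-integral rationals. -/
/-- `x` equals `p^k` times a `p`-integral rational. -/
def PG (p k : ℕ) (x : ℚ) : Prop := ∃ a b : ℤ, ¬((p:ℤ) ∣ b) ∧ x * b = (p:ℚ) ^ k * a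

namespace PG

variable {p k l : ℕ} {x y : ℚ}

theorem not_dvd_one (hp : p.Prime) : ¬ ((p:ℤ) ∣ 1) := by
  intro h
  have h1 := Int.le_of_dvd one_pos h
  have h2 := hp.two_le
  omega

theorem zero (hp : p.Prime) : PG p k 0 :=
  ⟨0, 1, not_dvd_one hp, by simp⟩

theorem add (hx : PG p k x) (hy : PG p k y) (hp : p.Prime) : PG p k (x + y) := by
  obtain ⟨a1, b1, h1, e1⟩ := hx
  obtain ⟨a2, b2, h2, e2⟩ := hy
  refine ⟨a1 * b2 + a2 * b1, b1 * b2, ?_, ?_⟩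
  · intro h
    rcases (Int.Prime.dvd_mul' (by exact_mod_cast hp) h) with h | h
    exacts [h1 h, h2 h]
  · push_cast
    calc (x + y) * (b1 * b2) = (x * b1) * b2 + (y * b2) * b1 := by ring
    _ = (p:ℚ)^k * (a1 * b2 + a2 * b1) := by rw [e1, e2]; ring

theorem neg (hx : PG p k x) : PG p k (-x) := by
  obtain ⟨a, b, h, e⟩ := hx
  exact ⟨-a, b, h, by push_cast; linear_combination -e⟩

theorem sub (hx : PG p k x) (hy : PG p k y) (hp : p.Prime) : PG p k (x - y) := by
  simpa [sub_eq_add_neg] using hx.add hy.neg hp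

theorem mul (hx : PG p k x) (hy : PG p l y) (hp : p.Prime) : PG p (k + l) (x * y) := by
  obtain ⟨a1, b1, h1, e1⟩ := hx
  obtain ⟨a2, b2, h2, e2⟩ := hy
  refine ⟨a1 * a2, b1 * b2, ?_, ?_⟩
  · intro h
    rcases (Int.Prime.dvd_mul' (by exact_mod_cast hp) h) with h | h
    exacts [h1 h, h2 h]
  · push_cast
    calc (x * y) * (b1 * b2) = (x * b1) * (y * b2) := by ring
    _ = (p:ℚ)^(k+l) * (a1 * a2) := by rw [e1, e2]; ring

theorem mono (hx : PG p k x) (h : l ≤ k) : PG p l x := by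
  obtain ⟨a, b, hb, e⟩ := hx
  refine ⟨p ^ (k - l) * a, b, hb, ?_⟩
  push_cast
  have hk : (p:ℚ)^k = (p:ℚ)^l * (p:ℚ)^(k-l) := by rw [← pow_add]; congr 1; omega
  rw [e, hk]
  ring

theorem intCast (n : ℤ) (hp : p.Prime) (h : (p:ℤ)^k ∣ n) : PG p k ((n : ℚ)) := by
  obtain ⟨c, rfl⟩ := h
  exact ⟨c, 1, not_dvd_one hp, by push_cast; ring⟩

theorem int_div (n m : ℤ) (hm : ¬ ((p:ℤ) ∣ m)) : PG p 0 ((n : ℚ) / (m : ℚ)) := by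
  have hm0 : m ≠ 0 := by rintro rfl; exact hm (dvd_zero _)
  exact ⟨n, m, hm, by field_simp⟩

theorem p_pow (hp : p.Prime) (j : ℕ) (h : k ≤ j) : PG p k ((p:ℚ) ^ j) := by
  have := PG.intCast (p := p) (k := k) ((p:ℤ)^j) hp (pow_dvd_pow _ h)
  push_cast at this
  exact this

theorem div_p (hp : p.Prime) (hx : PG p (k+1) ((p:ℚ) * x)) : PG p k x := by
  obtain ⟨a, b, hb, e⟩ := hx
  have hp0 : (p:ℚ) ≠ 0 := by exact_mod_cast hp.ne_zero
  refine ⟨a, b, hb, ?_⟩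
  have : (p:ℚ) * (x * b) = (p:ℚ) * ((p:ℚ)^k * a) := by
    rw [pow_succ] at e
    linear_combination e
  exact mul_left_cancel₀ hp0 this

theorem unit_cancel (hp : p.Prime) (c : ℤ) (hc : ¬ ((p:ℤ) ∣ c)) (hx : PG p k ((c:ℚ) * x)) :
    PG p k x := by
  obtain ⟨a, b, hb, e⟩ := hx
  refine ⟨a, c * b, ?_, ?_⟩
  · intro h
    rcases (Int.Prime.dvd_mul' (by exact_mod_cast hp) h) with h | h
    exacts [hc h, hb h]
  · push_cast
    linear_combination e

theorem sum {ι : Type*} (hp : p.Prime) (s : Finset ι) (f : ι → ℚ)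
    (h : ∀ i ∈ s, PG p k (f i)) : PG p k (∑ i ∈ s, f i) := by
  classical
  induction s using Finset.induction_on with
  | empty => simpa using PG.zero hp
  | @insert a s' hne ih =>
    rw [Finset.sum_insert hne]
    exact (h a (Finset.mem_insert_self a s')).add (ih fun i hi => h i (Finset.mem_insert_of_mem hi)) hp

end PG
def Sz (p m : ℕ) : ℤ := ∑ x ∈ Finset.range p, (x:ℤ)^m

theorem cast_Sz (p m : ℕ) : ((Sz p m : ℤ) : ℚ) = ∑ x ∈ Finset.range p, (x:ℚ)^m := by
  unfold Sz; push_cast; rfl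

theorem sum_univ_zmod {M : Type*} [AddCommMonoid M] (p : ℕ) [NeZero p] (f : ZMod p → M) (g : ℕ → M)
    (hfg : ∀ x, g x = f ↑x) : ∑ c : ZMod p, f c = ∑ x ∈ Finset.range p, g x := by
  refine Finset.sum_nbij' (fun c => c.val) (fun x => (x : ZMod p)) ?_ ?_ ?_ ?_ ?_
  · intro c _; exact Finset.mem_range.mpr c.val_lt
  · intro x _; exact Finset.mem_univ _
  · intro c _; exact ZMod.natCast_rightInverse c
  · intro x hx; exact ZMod.val_cast_of_lt (Finset.mem_range.mp hx)
  · intro c _; rw [hfg]; rw [ZMod.natCast_rightInverse c]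

theorem dvd_Sz {p : ℕ} (hp : p.Prime) (m : ℕ) (hm : m < p - 1) : (p:ℤ) ∣ Sz p m := by
  haveI : Fact p.Prime := ⟨hp⟩
  haveI : NeZero p := ⟨hp.ne_zero⟩
  rw [← ZMod.intCast_zmod_eq_zero_iff_dvd]
  unfold Sz
  push_cast
  rw [← sum_univ_zmod p (fun c => c ^ m) (fun x => (x:ZMod p) ^ m) (fun x => rfl)]
  exact FiniteField.sum_pow_lt_card_sub_one (ZMod p) m (by rw [ZMod.card]; omega)

theorem bernoulli_term (p m : ℕ) :
    bernoulli m * (((m+1).choose m : ℕ) : ℚ) * (p:ℚ)^(m+1-m) / ((m:ℚ)+1) = (p:ℚ) * bernoulli m := by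
  have h2 : (((m+1).choose m : ℕ) : ℚ) = (m:ℚ)+1 := by rw [Nat.choose_succ_self_right]; push_cast; ring
  have h3 : m + 1 - m = 1 := by omega
  have h1 : (m:ℚ)+1 ≠ 0 := by positivity
  rw [h2, h3, pow_one]
  field_simp

theorem faulhaber_split (p m : ℕ) :
    (∑ k ∈ Finset.range p, (k:ℚ)^m) - (p:ℚ) * bernoulli m
      = ∑ i ∈ Finset.range m, bernoulli i * (((m+1).choose i : ℕ) : ℚ) * (p:ℚ)^(m+1-i) / ((m:ℚ)+1) := by
  rw [sum_range_pow, Finset.sum_range_succ, bernoulli_term]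
  ring

theorem not_dvd_int {p : ℕ} (hp : p.Prime) (c : ℕ) (h0 : 0 < c) (hcp : c < p) : ¬ ((p:ℤ) ∣ (c:ℤ)) := by
  intro h
  have := Int.le_of_dvd (by exact_mod_cast h0) h
  omega

theorem bern_int {p : ℕ} (hp : p.Prime) : ∀ m, m ≤ p - 2 → PG p 0 (bernoulli m) := by
  intro m
  induction m using Nat.strong_induction_on with
  | _ m ih =>
    intro hm
    have hp2 := hp.two_le
    apply PG.div_p hp
    have key : (p:ℚ) * bernoulli m
        = (∑ k ∈ Finset.range p, (k:ℚ)^m)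
          - ∑ i ∈ Finset.range m, bernoulli i * (((m+1).choose i : ℕ) : ℚ) * (p:ℚ)^(m+1-i) / ((m:ℚ)+1) := by
      linear_combination -faulhaber_split p m
    rw [key]
    apply PG.sub _ _ hp
    · rw [← cast_Sz]
      exact PG.intCast _ hp (by simpa using dvd_Sz hp m (by omega))
    · apply PG.sum hp
      intro i hi
      have hi' := Finset.mem_range.mp hi
      have hrw : bernoulli i * (((m+1).choose i : ℕ) : ℚ) * (p:ℚ)^(m+1-i) / ((m:ℚ)+1)
          = bernoulli i * ((((m+1).choose i : ℤ) : ℚ) / (((m+1 : ℕ) : ℤ) : ℚ)) * (p:ℚ)^(m+1-i) := by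
        push_cast
        ring
      rw [hrw]
      have h1 : PG p 0 (bernoulli i) := ih i hi' (by omega)
      have h2 : PG p 0 ((((m+1).choose i : ℤ) : ℚ) / (((m+1 : ℕ) : ℤ) : ℚ)) :=
        PG.int_div _ _ (not_dvd_int hp (m+1) (by omega) (by omega))
      have h3 : PG p 1 ((p:ℚ)^(m+1-i)) := PG.p_pow hp _ (by omega)
      exact (h1.mul h2 hp).mul h3 hp
theorem S_cong {p : ℕ} (hp : p.Prime) (hodd : Odd p) (m : ℕ) (hm : m < p) :
    PG p 2 ((∑ k ∈ Finset.range p, (k:ℚ)^m) - (p:ℚ) * bernoulli m) := by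
  have hp2 := hp.two_le
  have hp3 : 3 ≤ p := by
    obtain ⟨c, hc⟩ := hodd
    omega
  rcases lt_or_ge m (p-1) with hlt | hge
  · -- 0 ≤ m ≤ p-2
    rw [faulhaber_split]
    apply PG.sum hp
    intro i hi
    have hi' := Finset.mem_range.mp hi
    have hrw : bernoulli i * (((m+1).choose i : ℕ) : ℚ) * (p:ℚ)^(m+1-i) / ((m:ℚ)+1)
        = bernoulli i * ((((m+1).choose i : ℤ) : ℚ) / (((m+1 : ℕ) : ℤ) : ℚ)) * (p:ℚ)^(m+1-i) := by
      push_cast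
      ring
    rw [hrw]
    have h1 : PG p 0 (bernoulli i) := bern_int hp i (by omega)
    have h2 : PG p 0 ((((m+1).choose i : ℤ) : ℚ) / (((m+1 : ℕ) : ℤ) : ℚ)) :=
      PG.int_div _ _ (not_dvd_int hp (m+1) (by omega) (by omega))
    have h3 : PG p 2 ((p:ℚ)^(m+1-i)) := PG.p_pow hp _ (by omega)
    exact (h1.mul h2 hp).mul h3 hp
  · -- m = p-1
    have hm1 : m = p - 1 := by omega
    have hmp : m + 1 = p := by omega
    apply PG.div_p hp
    have hp0 : (p:ℚ) ≠ 0 := by exact_mod_cast hp.ne_zero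
    have hcast : ((m:ℚ))+1 = (p:ℚ) := by
      have : ((m+1 : ℕ) : ℚ) = (p:ℚ) := by rw [hmp]
      push_cast at this
      linarith
    have key : (p:ℚ) * ((∑ k ∈ Finset.range p, (k:ℚ)^m) - (p:ℚ) * bernoulli m)
        = ∑ i ∈ Finset.range m, bernoulli i * (((m+1).choose i : ℕ) : ℚ) * (p:ℚ)^(m+1-i) := by
      rw [faulhaber_split, Finset.mul_sum]
      apply Finset.sum_congr rfl
      intro i _
      rw [hcast]
      field_simp
    rw [key]
    apply PG.sum hp
    intro i hi
    have hi' := Finset.mem_range.mp hi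
    rcases eq_or_ne i 0 with rfl | hi0
    · have : bernoulli 0 * (((m+1).choose 0 : ℕ) : ℚ) * (p:ℚ)^(m+1-0) = (p:ℚ)^(m+1) := by
        simp [bernoulli_zero]
      rw [this]
      exact PG.p_pow hp _ (by omega)
    · have h1 : PG p 0 (bernoulli i) := bern_int hp i (by omega)
      have h2 : PG p 1 ((((m+1).choose i : ℕ) : ℚ)) := by
        apply PG.intCast (((m+1).choose i : ℕ) : ℤ) hp
        have : p ∣ (m+1).choose i := by
          rw [hmp]
          exact hp.dvd_choose_self hi0 (by omega)
        rw [pow_one]; exact_mod_cast this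
      have h3 : PG p 2 ((p:ℚ)^(m+1-i)) := PG.p_pow hp _ (by omega)
      exact ((h1.mul h2 hp).mul h3 hp).mono (by norm_num)
open Polynomial in
theorem poly_sum_dvd {p : ℕ} (hp : p.Prime) (D : Polynomial ℤ)
    (hdeg : ∀ j, p - 1 ≤ j → D.coeff j = 0)
    (hcoeff : ∀ j, (p:ℤ) ∣ D.coeff j) :
    (p:ℤ)^2 ∣ ∑ x ∈ Finset.range p, D.eval (x:ℤ) := by
  have hp2 := hp.two_le
  have hdlt : D.natDegree < p := by
    rcases eq_or_ne D 0 with rfl | hD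
    · simpa using by omega
    · by_contra h
      push_neg at h
      exact hD (Polynomial.leadingCoeff_eq_zero.mp (hdeg _ (by omega)))
  have hsum : ∑ x ∈ Finset.range p, D.eval (x:ℤ) = ∑ j ∈ Finset.range p, D.coeff j * Sz p j := by
    have h1 : ∀ x : ℤ, D.eval x = ∑ j ∈ Finset.range p, D.coeff j * x ^ j := fun x =>
      Polynomial.eval_eq_sum_range' hdlt x
    have h2 : ∑ x ∈ Finset.range p, D.eval (x:ℤ)
        = ∑ x ∈ Finset.range p, ∑ j ∈ Finset.range p, D.coeff j * (x:ℤ) ^ j :=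
      Finset.sum_congr rfl (fun x _ => h1 _)
    rw [h2, Finset.sum_comm]
    apply Finset.sum_congr rfl
    intro j _
    rw [Sz, Finset.mul_sum]
  rw [hsum]
  apply Finset.dvd_sum
  intro j hj
  have hj' := Finset.mem_range.mp hj
  rcases lt_or_ge j (p-1) with hlt | hge
  · rw [sq]
    exact mul_dvd_mul (hcoeff j) (dvd_Sz hp j hlt)
  · rw [hdeg j hge, zero_mul]
    exact dvd_zero _

open Polynomial in
noncomputable def Pp (p : ℕ) : Polynomial ℤ := ∏ a ∈ Finset.range (p-1), (X - C ((a:ℤ)+1))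

open Polynomial in
theorem Pp_monic (p : ℕ) : (Pp p).Monic :=
  Polynomial.monic_prod_of_monic _ _ fun a _ => Polynomial.monic_X_sub_C _

open Polynomial in
theorem Pp_natDegree (p : ℕ) : (Pp p).natDegree = p - 1 := by
  rw [Pp, Polynomial.natDegree_prod _ _ fun a _ => Polynomial.X_sub_C_ne_zero _]
  simp only [Polynomial.natDegree_X_sub_C, Finset.sum_const, Finset.card_range, smul_eq_mul,
    mul_one]

open Polynomial in
theorem sum_eval_Pp {p : ℕ} (hp : p.Prime) (hodd : Odd p) :
    ∑ x ∈ Finset.range p, (Pp p).eval (x:ℤ) = ((p-1).factorial : ℤ) := by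
  have hp2 := hp.two_le
  have heven : Even (p - 1) := by
    obtain ⟨c, hc⟩ := hodd
    exact ⟨c, by omega⟩
  have e := Finset.sum_range_succ' (fun x => (Pp p).eval (x:ℤ)) (p-1)
  rw [show (p-1)+1 = p from by omega] at e
  rw [e]
  have hz : ∀ i ∈ Finset.range (p-1), (Pp p).eval ((i+1 : ℕ):ℤ) = 0 := by
    intro i hi
    rw [Pp, Polynomial.eval_prod]
    apply Finset.prod_eq_zero hi
    push_cast
    simp
  rw [Finset.sum_congr rfl hz, Finset.sum_const, smul_zero, zero_add]
  rw [Pp, Polynomial.eval_prod]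
  have : ∀ a ∈ Finset.range (p-1), (X - C ((a:ℤ)+1)).eval ((0:ℕ):ℤ) = (-1) * ((a:ℤ)+1) := by
    intro a _
    simp only [Polynomial.eval_sub, Polynomial.eval_X, Polynomial.eval_C, Nat.cast_zero]
    ring
  rw [Finset.prod_congr rfl this, Finset.prod_mul_distrib, Finset.prod_const]
  have h1 : ((-1 : ℤ))^(Finset.range (p-1)).card = 1 := by
    rw [Finset.card_range]
    exact heven.neg_one_pow
  rw [h1, one_mul]
  have := Finset.prod_range_add_one_eq_factorial (p-1)
  have := congrArg (fun n : ℕ => (n : ℤ)) this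
  push_cast at this
  exact this
open Polynomial in
theorem prod_X_sub_C_univ (p : ℕ) [Fact p.Prime] :
    ∏ c : ZMod p, (X - C c) = X ^ p - X := by
  have hp := (Fact.out : p.Prime)
  have h1 : (1 : WithBot ℕ) < (p : ℕ) := by exact_mod_cast hp.one_lt
  have hm : (X ^ p - X : (ZMod p)[X]).Monic := by
    apply Polynomial.monic_X_pow_sub
    rw [Polynomial.degree_X]
    exact_mod_cast h1
  have hcard : Fintype.card (ZMod p) = p := ZMod.card p
  have hroots : (X ^ p - X : (ZMod p)[X]).roots = Finset.univ.val := by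
    have := FiniteField.roots_X_pow_card_sub_X (ZMod p)
    rwa [hcard] at this
  have hnd : (X ^ p - X : (ZMod p)[X]).natDegree = p := by
    have := FiniteField.X_pow_card_sub_X_natDegree_eq (ZMod p) hp.one_lt
    exact this
  have := Polynomial.prod_multiset_X_sub_C_of_monic_of_roots_card_eq hm
    (by rw [hroots, hnd]; simpa using hcard)
  rw [hroots] at this
  rw [← this]
  rfl

theorem prod_erase_zero_zmod {M : Type*} [CommMonoid M] (p : ℕ) [NeZero p]
    (f : ZMod p → M) (g : ℕ → M) (hfg : ∀ x, g x = f (↑(x+1))) :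
    ∏ c ∈ Finset.univ.erase (0 : ZMod p), f c = ∏ x ∈ Finset.range (p-1), g x := by
  have hp1 : 1 ≤ p := Nat.one_le_iff_ne_zero.mpr (NeZero.ne p)
  refine Finset.prod_nbij' (fun c => c.val - 1) (fun x => ((x+1 : ℕ) : ZMod p)) ?_ ?_ ?_ ?_ ?_
  · intro c hc
    have hc0 : c ≠ 0 := (Finset.mem_erase.mp hc).1
    have h1 : c.val ≠ 0 := fun h => hc0 ((ZMod.val_eq_zero c).mp h)
    have h2 := c.val_lt
    exact Finset.mem_range.mpr (by omega)
  · intro x hx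
    have hx' := Finset.mem_range.mp hx
    refine Finset.mem_erase.mpr ⟨?_, Finset.mem_univ _⟩
    intro h
    have := (ZMod.natCast_eq_zero_iff (x+1) p).mp h
    have := Nat.le_of_dvd (by omega) this
    omega
  · intro c hc
    have hc0 : c ≠ 0 := (Finset.mem_erase.mp hc).1
    have h1 : c.val ≠ 0 := fun h => hc0 ((ZMod.val_eq_zero c).mp h)
    rw [show c.val - 1 + 1 = c.val from by omega]
    exact ZMod.natCast_rightInverse c
  · intro x hx
    have hx' := Finset.mem_range.mp hx
    rw [ZMod.val_cast_of_lt (by omega)]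
    omega
  · intro c hc
    have hc0 : c ≠ 0 := (Finset.mem_erase.mp hc).1
    have h1 : c.val ≠ 0 := fun h => hc0 ((ZMod.val_eq_zero c).mp h)
    rw [hfg, show c.val - 1 + 1 = c.val from by omega, ZMod.natCast_rightInverse c]

open Polynomial in
theorem map_Pp {p : ℕ} (hp : p.Prime) :
    (Pp p).map (Int.castRingHom (ZMod p)) = X ^ (p-1) - 1 := by
  haveI : Fact p.Prime := ⟨hp⟩
  haveI : NeZero p := ⟨hp.ne_zero⟩
  have hp2 := hp.two_le
  have key := prod_X_sub_C_univ p
  have herase : (X - C (0 : ZMod p)) * ∏ c ∈ Finset.univ.erase (0 : ZMod p), (X - C c)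
      = ∏ c : ZMod p, (X - C c) :=
    Finset.mul_prod_erase (Finset.univ : Finset (ZMod p)) (fun c => X - C c) (Finset.mem_univ 0)
  have hX : (X - C (0 : ZMod p)) = X := by simp
  have hpow : (X : (ZMod p)[X]) * (X ^ (p-1) - 1) = X ^ p - X := by
    rw [mul_sub, mul_one, ← pow_succ']
    rw [show (p-1)+1 = p from by omega]
  have hcancel : ∏ c ∈ Finset.univ.erase (0 : ZMod p), (X - C c) = X ^ (p-1) - 1 := by
    apply mul_left_cancel₀ (Polynomial.X_ne_zero (R := ZMod p))
    rw [hpow, ← key, ← herase, hX]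
  rw [← hcancel, Pp, Polynomial.map_prod]
  have : ∀ a ∈ Finset.range (p-1), (X - C ((a:ℤ)+1)).map (Int.castRingHom (ZMod p))
      = X - C (((a+1 : ℕ) : ZMod p)) := by
    intro a _
    rw [Polynomial.map_sub, Polynomial.map_X, Polynomial.map_C]
    congr 1
    rw [show ((Int.castRingHom (ZMod p)) ((a:ℤ) + 1)) = (((a:ℤ)+1 : ℤ) : ZMod p) from rfl]
    push_cast
    ring
  rw [Finset.prod_congr rfl this]
  exact (prod_erase_zero_zmod p (fun c => X - C c) (fun a => X - C (((a+1 : ℕ) : ZMod p)))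
    (fun x => rfl)).symm

open Polynomial in
noncomputable def Gp (p : ℕ) : Polynomial ℤ := ∑ j ∈ Finset.range p, X ^ j

open Polynomial in
theorem map_Gp {p : ℕ} (hp : p.Prime) :
    (Gp p).map (Int.castRingHom (ZMod p)) = (X - 1) ^ (p-1) := by
  haveI : Fact p.Prime := ⟨hp⟩
  have hp2 := hp.two_le
  have hmap : (Gp p).map (Int.castRingHom (ZMod p)) = ∑ j ∈ Finset.range p, (X:(ZMod p)[X]) ^ j := by
    rw [Gp, Polynomial.map_sum]
    simp
  rw [hmap]
  have h1 := geom_sum_mul (X : (ZMod p)[X]) p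
  have h2 : (X - 1 : (ZMod p)[X]) ^ p = X ^ p - 1 := by
    have := sub_pow_char (X : (ZMod p)[X]) 1 (p := p)
    simpa using this
  have h3 : (X - 1 : (ZMod p)[X]) ^ p = (X - 1) ^ (p-1) * (X - 1) := by
    rw [← pow_succ, show (p-1)+1 = p from by omega]
  have hne : (X - 1 : (ZMod p)[X]) ≠ 0 := by
    have := Polynomial.X_sub_C_ne_zero (1 : ZMod p)
    simpa using this
  apply mul_right_cancel₀ hne
  rw [h1, ← h2, h3]
open Polynomial in
theorem Gp_coeff (p j : ℕ) : (Gp p).coeff j = if j < p then 1 else 0 := by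
  rw [Gp, Polynomial.finset_sum_coeff]
  have : ∀ i ∈ Finset.range p, (X ^ i : ℤ[X]).coeff j = if j = i then 1 else 0 := by
    intro i _
    rw [Polynomial.coeff_X_pow]
  rw [Finset.sum_congr rfl this, Finset.sum_ite_eq]
  simp

open Polynomial in
theorem coeff_dvd_of_map_zero {p : ℕ} (D : ℤ[X]) (h : D.map (Int.castRingHom (ZMod p)) = 0)
    (j : ℕ) : (p:ℤ) ∣ D.coeff j := by
  have h2 := congrArg (fun q => Polynomial.coeff q j) h
  simp only [Polynomial.coeff_map, Polynomial.coeff_zero] at h2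
  exact (ZMod.intCast_zmod_eq_zero_iff_dvd _ p).mp h2

theorem one_sub_pow (p n : ℕ) : (p:ℤ)^2 ∣ (1 - (p:ℤ))^n - (1 - (n:ℤ)*(p:ℤ)) := by
  induction n with
  | zero => simp
  | succ n ih =>
    obtain ⟨c, hc⟩ := ih
    refine ⟨c * (1 - (p:ℤ)) + n, ?_⟩
    push_cast
    linear_combination (1 - (p:ℤ)) * hc

open Polynomial in
theorem int_part {p : ℕ} (hp : p.Prime) (hodd : Odd p) :
    (p:ℤ)^2 ∣ (∑ x ∈ Finset.range p, ∑ j ∈ Finset.range p, (x:ℤ)^j) - ((p-1).factorial : ℤ) := by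
  have hp2 := hp.two_le
  have heven : Even (p - 1) := by
    obtain ⟨c, hc⟩ := hodd
    exact ⟨c, by omega⟩
  haveI : Fact p.Prime := ⟨hp⟩
  set D1 : ℤ[X] := X^(p-1) - 1 - Pp p with hD1
  set D2 : ℤ[X] := Gp p - (X - 1)^(p-1) with hD2
  have hC1 : (1 : ℤ[X]) = C 1 := Polynomial.C_1.symm
  have hXm : ((X - 1 : ℤ[X])^(p-1)).Monic := by
    rw [hC1]
    exact (Polynomial.monic_X_sub_C (1:ℤ)).pow (p-1)
  have hXnd : ((X - 1 : ℤ[X])^(p-1)).natDegree = p - 1 := by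
    rw [hC1, Polynomial.natDegree_pow, Polynomial.natDegree_X_sub_C, mul_one]
  -- coefficient vanishing above degree p-2
  have hD1deg : ∀ j, p - 1 ≤ j → D1.coeff j = 0 := by
    intro j hj
    rw [hD1]
    simp only [Polynomial.coeff_sub, Polynomial.coeff_X_pow, Polynomial.coeff_one]
    rcases eq_or_lt_of_le hj with hj1 | hj2
    · subst hj1
      rw [if_pos rfl, if_neg (by omega)]
      have : (Pp p).coeff (p-1) = 1 := by
        have := (Pp_monic p).coeff_natDegree
        rwa [Pp_natDegree] at this
      rw [this]
      ring
    · rw [if_neg (by omega), if_neg (by omega)]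
      have : (Pp p).coeff j = 0 :=
        Polynomial.coeff_eq_zero_of_natDegree_lt (by rw [Pp_natDegree]; omega)
      rw [this]
      ring
  have hD2deg : ∀ j, p - 1 ≤ j → D2.coeff j = 0 := by
    intro j hj
    rw [hD2]
    simp only [Polynomial.coeff_sub, Gp_coeff]
    rcases eq_or_lt_of_le hj with hj1 | hj2
    · subst hj1
      rw [if_pos (by omega)]
      have := hXm.coeff_natDegree
      rw [hXnd] at this
      rw [this]
      ring
    · rw [if_neg (by omega)]
      have : ((X - 1 : ℤ[X])^(p-1)).coeff j = 0 :=
        Polynomial.coeff_eq_zero_of_natDegree_lt (by rw [hXnd]; omega)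
      rw [this]
      ring
  -- coefficient divisibility
  have hD1dvd : ∀ j, (p:ℤ) ∣ D1.coeff j := by
    apply coeff_dvd_of_map_zero
    rw [hD1]
    rw [Polynomial.map_sub, Polynomial.map_sub, Polynomial.map_pow, Polynomial.map_X,
      Polynomial.map_one, map_Pp hp]
    ring
  have hD2dvd : ∀ j, (p:ℤ) ∣ D2.coeff j := by
    apply coeff_dvd_of_map_zero
    rw [hD2]
    rw [Polynomial.map_sub, Polynomial.map_pow, Polynomial.map_sub, Polynomial.map_X,
      Polynomial.map_one, map_Gp hp]
    ring
  have key1 := poly_sum_dvd hp D1 hD1deg hD1dvd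
  have key2 := poly_sum_dvd hp D2 hD2deg hD2dvd
  -- evaluation identities
  have hGpe : ∀ x : ℤ, (Gp p).eval x = ∑ j ∈ Finset.range p, x ^ j := by
    intro x
    rw [Gp, Polynomial.eval_finset_sum]
    simp
  have hs1 : ∑ x ∈ Finset.range p, D1.eval (x:ℤ)
      = (∑ x ∈ Finset.range p, (x:ℤ)^(p-1)) - p - ∑ x ∈ Finset.range p, (Pp p).eval (x:ℤ) := by
    rw [hD1]
    simp only [Polynomial.eval_sub, Polynomial.eval_pow, Polynomial.eval_X, Polynomial.eval_one]
    rw [Finset.sum_sub_distrib, Finset.sum_sub_distrib, Finset.sum_const, Finset.card_range]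
    push_cast
    ring
  have hs2 : ∑ x ∈ Finset.range p, D2.eval (x:ℤ)
      = (∑ x ∈ Finset.range p, ∑ j ∈ Finset.range p, (x:ℤ)^j)
        - ∑ x ∈ Finset.range p, ((x:ℤ)-1)^(p-1) := by
    rw [hD2]
    simp only [Polynomial.eval_sub, Polynomial.eval_pow, Polynomial.eval_X, Polynomial.eval_one]
    rw [Finset.sum_sub_distrib]
    congr 1
    exact Finset.sum_congr rfl fun x _ => hGpe (x:ℤ)
  -- reindexing identities
  have e1 : ∑ x ∈ Finset.range p, ((x:ℤ)-1)^(p-1)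
      = (∑ i ∈ Finset.range (p-1), (i:ℤ)^(p-1)) + 1 := by
    have e := Finset.sum_range_succ' (fun x : ℕ => ((x:ℤ)-1)^(p-1)) (p-1)
    rw [show (p-1)+1 = p from by omega] at e
    rw [e]
    congr 1
    · apply Finset.sum_congr rfl
      intro i _
      push_cast
      ring_nf
    · simp only [Nat.cast_zero]
      rw [show ((0:ℤ) - 1) = -1 by ring]
      exact heven.neg_one_pow
  have e2 : ∑ x ∈ Finset.range p, (x:ℤ)^(p-1)
      = (∑ i ∈ Finset.range (p-1), (i:ℤ)^(p-1)) + ((p:ℤ)-1)^(p-1) := by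
    have e := Finset.sum_range_succ (fun x : ℕ => (x:ℤ)^(p-1)) (p-1)
    rw [show (p-1)+1 = p from by omega] at e
    rw [e]
    congr 2
    push_cast [Nat.cast_sub (by omega : 1 ≤ p)]
    ring
  have e3 := sum_eval_Pp hp hodd
  -- the binomial congruence
  have key3 : (p:ℤ)^2 ∣ 1 + (p:ℤ) - ((p:ℤ)-1)^(p-1) := by
    obtain ⟨c, hc⟩ := one_sub_pow p (p-1)
    push_cast [Nat.cast_sub (by omega : 1 ≤ p)] at hc
    refine ⟨1 - c, ?_⟩
    rw [show ((p:ℤ)-1) = -(1 - (p:ℤ)) by ring, heven.neg_pow]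
    linear_combination -hc
  -- assemble
  have hsplit : (∑ x ∈ Finset.range p, ∑ j ∈ Finset.range p, (x:ℤ)^j) - ((p-1).factorial : ℤ)
      = (∑ x ∈ Finset.range p, D2.eval (x:ℤ)) + (1 + (p:ℤ) - ((p:ℤ)-1)^(p-1))
        + (∑ x ∈ Finset.range p, D1.eval (x:ℤ)) := by
    rw [hs1, hs2, e1, e2, e3]
    ring
  rw [hsplit]
  exact dvd_add (dvd_add key2 key3) key1
theorem bernoulli_sum_congruence_mod_p_sq (p : ℕ) (hp : p.Prime) (hodd : Odd p) :
    ∃ t : ℚ, ¬ (p ∣ t.den) ∧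
      (∑ j ∈ Finset.range (p + 1), (p : ℚ) * bernoulli j) - ((p - 1).factorial : ℚ)
        = (p : ℚ) ^ 2 * t := by
  have hp2 := hp.two_le
  have hp3 : 3 ≤ p := by obtain ⟨c, hc⟩ := hodd; omega
  have hBp : bernoulli p = 0 := by
    rw [bernoulli_eq_bernoulli'_of_ne_one (by omega)]
    exact bernoulli'_eq_zero_of_odd hodd (by omega)
  have hmain : PG p 2 ((∑ j ∈ Finset.range (p + 1), (p : ℚ) * bernoulli j)
      - ((p - 1).factorial : ℚ)) := by
    have hsum : ∑ j ∈ Finset.range (p + 1), (p : ℚ) * bernoulli j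
        = ∑ j ∈ Finset.range p, (p:ℚ) * bernoulli j := by
      rw [Finset.sum_range_succ, hBp, mul_zero, add_zero]
    have hN : ((∑ x ∈ Finset.range p, ∑ j ∈ Finset.range p, (x:ℤ)^j : ℤ) : ℚ)
        = ∑ j ∈ Finset.range p, ∑ k ∈ Finset.range p, (k:ℚ)^j := by
      push_cast
      exact Finset.sum_comm
    have split : (∑ j ∈ Finset.range (p + 1), (p : ℚ) * bernoulli j) - ((p - 1).factorial : ℚ)
        = (∑ j ∈ Finset.range p, ((p:ℚ) * bernoulli j - ∑ k ∈ Finset.range p, (k:ℚ)^j))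
          + (((∑ x ∈ Finset.range p, ∑ j ∈ Finset.range p, (x:ℤ)^j)
              - ((p - 1).factorial : ℤ) : ℤ) : ℚ) := by
      rw [hsum, Finset.sum_sub_distrib]
      push_cast [hN]
      ring
    rw [split]
    apply PG.add _ _ hp
    · apply PG.sum hp
      intro j hj
      have h := (S_cong hp hodd j (Finset.mem_range.mp hj)).neg
      rw [neg_sub] at h
      exact h
    · exact PG.intCast _ hp (int_part hp hodd)
  obtain ⟨a, b, hb, he⟩ := hmain
  have hbz : b ≠ 0 := fun h => hb (h ▸ dvd_zero _)
  have hb0 : (b:ℚ) ≠ 0 := Int.cast_ne_zero.mpr hbz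
  refine ⟨(a:ℚ)/(b:ℚ), ?_, ?_⟩
  · have hden : ((((a:ℚ)/(b:ℚ)).den : ℕ) : ℤ) ∣ b := by
      rw [← Rat.divInt_eq_div]
      exact Rat.den_dvd a b
    intro hdvd
    have : (p:ℤ) ∣ ((((a:ℚ)/(b:ℚ)).den : ℕ) : ℤ) := by exact_mod_cast hdvd
    exact hb (dvd_trans this hden)
  · field_simp
    linear_combination he
end

section
/- For every prime p ≥ 5, the rational number (∑_{j=0}^{p-3} B_j) + 1 is p times a rational number whose denominator is not divisible by p; that is, ∑_{j=0}^{p-3} B_j ≡ -1 (mod p) in the ring of p-integral rationals. -/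
open Finset

section aux

variable {p : ℕ} [hp : Fact p.Prime]

lemma den_not_dvd_of_padicNorm_le {q : ℚ} (h : padicNorm p q ≤ 1) : ¬ p ∣ q.den := by
  intro hd
  have hp2 : 2 ≤ p := hp.out.two_le
  have hq : q ≠ 0 := by
    intro h0
    rw [h0, Rat.den_zero] at hd
    have := Nat.le_of_dvd one_pos hd
    omega
  have hnum : ¬ (p : ℤ) ∣ q.num := by
    intro hn
    have hpa : p ∣ q.num.natAbs := Int.natCast_dvd.mp hn
    have := Nat.dvd_gcd hpa hd
    rw [q.reduced] at this
    have := Nat.le_of_dvd one_pos this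
    omega
  have h1 : padicValInt p q.num = 0 := padicValInt.eq_zero_of_not_dvd hnum
  have h2 : 1 ≤ padicValNat p q.den := one_le_padicValNat_of_dvd q.pos.ne' hd
  have hv : padicValRat p q ≤ -1 := by
    rw [padicValRat, h1]
    omega
  rw [padicNorm.eq_zpow_of_nonzero hq] at h
  have hlt : (1 : ℚ) < (p : ℚ) ^ (-padicValRat p q) := by
    apply one_lt_zpow₀ (by exact_mod_cast hp.out.one_lt)
    omega
  linarith

lemma choose_zmod (k : ℕ) (hk : k ≤ p - 1) :
    (((p - 1).choose k : ℕ) : ZMod p) = (-1) ^ k := by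
  induction k with
  | zero => simp
  | succ k ih =>
    have hk' : k ≤ p - 1 := by omega
    have hp2 : 2 ≤ p := hp.out.two_le
    have hps : p = (p - 1) + 1 := by omega
    have hdvd : p ∣ p.choose (k + 1) :=
      hp.out.dvd_choose_self (by omega) (by omega)
    have hpas : p.choose (k + 1) = (p - 1).choose k + (p - 1).choose (k + 1) := by
      conv_lhs => rw [hps]
      rw [Nat.choose_succ_succ']
    have h0 : ((p.choose (k + 1) : ℕ) : ZMod p) = 0 :=
      (ZMod.natCast_eq_zero_iff _ _).mpr hdvd
    rw [hpas] at h0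
    push_cast at h0
    rw [ih hk'] at h0
    have : (((p - 1).choose (k + 1) : ℕ) : ZMod p) = -(-1) ^ k := by linear_combination h0
    rw [this]
    ring

lemma dvd_sum_pow (m : ℕ) (hm : m < p - 1) : p ∣ ∑ k ∈ range p, k ^ m := by
  haveI : NeZero p := ⟨hp.out.pos.ne'⟩
  rw [← ZMod.natCast_eq_zero_iff]
  push_cast
  have key : ∑ x : ZMod p, x ^ m = ∑ k ∈ range p, ((k : ZMod p)) ^ m :=
    Finset.sum_bij (fun x _ => x.val) (fun x _ => mem_range.mpr (ZMod.val_lt x))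
      (fun a _ b _ h => ZMod.val_injective p h)
      (fun k hk => ⟨(k : ZMod p), mem_univ _, ZMod.val_natCast_of_lt (mem_range.mp hk)⟩)
      (fun x _ => by rw [ZMod.natCast_rightInverse x])
  rw [← key, FiniteField.sum_pow_lt_card_sub_one (ZMod p) m (by rw [ZMod.card]; omega)]

lemma padicNorm_cast_le_inv_of_dvd {z : ℤ} (hz : (p : ℤ) ∣ z) :
    padicNorm p ((z : ℤ) : ℚ) ≤ (p : ℚ)⁻¹ := by
  have hz' : ((p ^ 1 : ℕ) : ℤ) ∣ z := by simpa using hz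
  have := padicNorm.dvd_iff_norm_le.mp hz'
  simpa using this

lemma bernoulli_padicNorm_le : ∀ m, m < p - 1 → padicNorm p (bernoulli m) ≤ 1 := by
  intro m
  induction m using Nat.strong_induction_on with
  | _ m ih =>
    intro hm
    have hp2 : 2 ≤ p := hp.out.two_le
    have hppos : (0 : ℚ) < p := by exact_mod_cast hp.out.pos
    have hm1 : ((m : ℚ) + 1) ≠ 0 := by positivity
    have faul := sum_range_pow p m
    rw [Finset.sum_range_succ] at faul
    have htop : bernoulli m * (((m + 1).choose m : ℕ) : ℚ) * (p : ℚ) ^ (m + 1 - m) / ((m : ℚ) + 1)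
        = (p : ℚ) * bernoulli m := by
      rw [Nat.choose_succ_self_right, Nat.add_sub_cancel_left]
      push_cast
      field_simp
    rw [htop] at faul
    have key : (p : ℚ) * bernoulli m = (∑ k ∈ range p, (k : ℚ) ^ m)
        - ∑ i ∈ range m, bernoulli i * (((m + 1).choose i : ℕ) : ℚ) * (p : ℚ) ^ (m + 1 - i) / ((m : ℚ) + 1) := by
      linear_combination -faul
    have hnorm1 : padicNorm p (∑ k ∈ range p, (k : ℚ) ^ m) ≤ (p : ℚ)⁻¹ := by
      have hd : (p : ℤ) ∣ ((∑ k ∈ range p, k ^ m : ℕ) : ℤ) :=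
        Int.natCast_dvd_natCast.mpr (dvd_sum_pow m hm)
      have := padicNorm_cast_le_inv_of_dvd hd
      rwa [show (((∑ k ∈ range p, k ^ m : ℕ) : ℤ) : ℚ) = ∑ k ∈ range p, (k : ℚ) ^ m by
        push_cast; ring] at this
    have hnorm2 : padicNorm p (∑ i ∈ range m, bernoulli i * (((m + 1).choose i : ℕ) : ℚ)
        * (p : ℚ) ^ (m + 1 - i) / ((m : ℚ) + 1)) ≤ (p : ℚ)⁻¹ := by
      apply padicNorm.sum_le'
      · intro i hi
        have hi' := mem_range.mp hi
        rw [padicNorm.div, padicNorm.mul, padicNorm.mul]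
        have hb : padicNorm p (bernoulli i) ≤ 1 := ih i hi' (by omega)
        have hc : padicNorm p (((m + 1).choose i : ℕ) : ℚ) ≤ 1 := padicNorm.of_nat _
        have hmden : padicNorm p ((m : ℚ) + 1) = 1 := by
          rw [show ((m : ℚ) + 1) = ((m + 1 : ℕ) : ℚ) by push_cast; ring]
          refine (padicNorm.nat_eq_one_iff _).mpr ?_
          intro hdvd
          have := Nat.le_of_dvd (by omega) hdvd
          omega
        have hppow : padicNorm p ((p : ℚ) ^ (m + 1 - i)) ≤ (p : ℚ)⁻¹ := by
          have hd : (p : ℤ) ∣ ((p ^ (m + 1 - i) : ℕ) : ℤ) := by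
            exact_mod_cast dvd_pow_self p (by omega : m + 1 - i ≠ 0)
          have := padicNorm_cast_le_inv_of_dvd hd
          rwa [show (((p ^ (m + 1 - i) : ℕ) : ℤ) : ℚ) = (p : ℚ) ^ (m + 1 - i) by push_cast; ring]
            at this
        rw [hmden, div_one]
        calc padicNorm p (bernoulli i) * padicNorm p (((m + 1).choose i : ℕ) : ℚ)
              * padicNorm p ((p : ℚ) ^ (m + 1 - i))
            ≤ 1 * 1 * (p : ℚ)⁻¹ := by
              apply mul_le_mul (mul_le_mul hb hc (padicNorm.nonneg _) zero_le_one)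
                hppow (padicNorm.nonneg _) (by norm_num)
          _ = (p : ℚ)⁻¹ := by ring
      · positivity
    have hfull : padicNorm p ((p : ℚ) * bernoulli m) ≤ (p : ℚ)⁻¹ := by
      rw [key]
      exact le_trans padicNorm.sub (max_le hnorm1 hnorm2)
    rw [padicNorm.mul,
      show padicNorm p (p : ℚ) = (p : ℚ)⁻¹ from padicNorm.padicNorm_p hp.out.one_lt] at hfull
    have hinv : (0 : ℚ) < (p : ℚ)⁻¹ := by positivity
    have := (mul_le_mul_iff_right₀ hinv).mp
      (by linarith : (p : ℚ)⁻¹ * padicNorm p (bernoulli m) ≤ (p : ℚ)⁻¹ * 1)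
    linarith

lemma bernoulli_odd_zero {n : ℕ} (h : Odd n) (h1 : 1 < n) : bernoulli n = 0 := by
  rw [bernoulli_eq_bernoulli'_of_ne_one (by omega)]
  exact bernoulli'_eq_zero_of_odd h h1

end aux

theorem bernoulli_truncated_sum_congruence (p : ℕ) (hp : p.Prime) (hp5 : 5 ≤ p) :
    ∃ t : ℚ, ¬ (p ∣ t.den) ∧
      (∑ j ∈ Finset.range (p - 3 + 1), bernoulli j) + 1 = (p : ℚ) * t := by
  haveI : Fact p.Prime := ⟨hp⟩
  have h32 : p - 3 + 1 = p - 2 := by omega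
  rw [h32]
  have hppos : (0 : ℚ) < p := by exact_mod_cast hp.pos
  set S := ∑ j ∈ range (p - 2), bernoulli j with hS
  -- the alternating-sign sum equals p - 1
  have hA : ∑ k ∈ range (p - 2), (-1 : ℚ) ^ k * (((p - 1).choose k : ℕ) : ℚ) * bernoulli k
      = (p : ℚ) - 1 := by
    have h0 : ∑ k ∈ range ((p - 2) + 1), ((((p - 2) + 1).choose k : ℕ) : ℚ) * bernoulli k = 0 := by
      rw [sum_bernoulli, if_neg (by omega)]
    rw [Finset.sum_range_succ, show (p - 2) + 1 = p - 1 by omega] at h0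
    have hodd : Odd (p - 2) := by
      obtain ⟨j, hj⟩ := hp.odd_of_ne_two (by omega)
      exact ⟨j - 1, by omega⟩
    have hbtop : bernoulli (p - 2) = 0 := bernoulli_odd_zero hodd (by omega)
    rw [hbtop, mul_zero, add_zero] at h0
    have hsplit : ∑ k ∈ range (p - 2), (-1 : ℚ) ^ k * (((p - 1).choose k : ℕ) : ℚ) * bernoulli k
        = (∑ k ∈ range (p - 2), (((p - 1).choose k : ℕ) : ℚ) * bernoulli k)
          + ∑ k ∈ range (p - 2), ((-1 : ℚ) ^ k - 1) * (((p - 1).choose k : ℕ) : ℚ) * bernoulli k := by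
      rw [← Finset.sum_add_distrib]
      exact Finset.sum_congr rfl fun k _ => by ring
    have hsingle : ∑ k ∈ range (p - 2),
        ((-1 : ℚ) ^ k - 1) * (((p - 1).choose k : ℕ) : ℚ) * bernoulli k = (p : ℚ) - 1 := by
      rw [Finset.sum_eq_single 1]
      · rw [bernoulli_one, Nat.choose_one_right]
        rw [show (((p - 1 : ℕ)) : ℚ) = (p : ℚ) - 1 by
          rw [Nat.cast_sub (by omega)]; norm_num]
        ring
      · intro k _ hne
        rcases Nat.even_or_odd k with he | ho
        · rw [he.neg_one_pow]; ring
        · have hk1 : 1 < k := by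
            have := Nat.odd_iff.mp ho
            omega
          rw [bernoulli_odd_zero ho hk1, mul_zero]
      · intro h1m
        exact absurd (mem_range.mpr (by omega : 1 < p - 2)) h1m
    rw [hsplit, h0, zero_add, hsingle]
  have hkey : S + 1 = (∑ k ∈ range (p - 2),
      (1 - (-1 : ℚ) ^ k * (((p - 1).choose k : ℕ) : ℚ)) * bernoulli k) + (p : ℚ) := by
    have hs : S = ∑ k ∈ range (p - 2),
        ((1 - (-1 : ℚ) ^ k * (((p - 1).choose k : ℕ) : ℚ)) * bernoulli k
          + (-1 : ℚ) ^ k * (((p - 1).choose k : ℕ) : ℚ) * bernoulli k) :=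
      Finset.sum_congr rfl fun k _ => by ring
    rw [hs, Finset.sum_add_distrib, hA]
    ring
  have hnorm : padicNorm p (S + 1) ≤ (p : ℚ)⁻¹ := by
    rw [hkey]
    refine le_trans padicNorm.nonarchimedean (max_le ?_ ?_)
    · refine padicNorm.sum_le' (fun k hk => ?_) (by positivity)
      have hk' := mem_range.mp hk
      rw [padicNorm.mul]
      have hb : padicNorm p (bernoulli k) ≤ 1 := bernoulli_padicNorm_le k (by omega)
      have hz : padicNorm p (1 - (-1 : ℚ) ^ k * (((p - 1).choose k : ℕ) : ℚ)) ≤ (p : ℚ)⁻¹ := by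
        have hzmod : (((1 - (-1 : ℤ) ^ k * ((p - 1).choose k : ℕ)) : ℤ) : ZMod p) = 0 := by
          push_cast
          rw [show ((((p-1).choose k : ℕ)) : ZMod p) = (-1) ^ k from choose_zmod k (by omega),
            ← mul_pow]
          simp
        have hdvd : (p : ℤ) ∣ (1 - (-1 : ℤ) ^ k * ((p - 1).choose k : ℕ)) :=
          (ZMod.intCast_zmod_eq_zero_iff_dvd _ _).mp hzmod
        have := padicNorm_cast_le_inv_of_dvd hdvd
        rwa [show (((1 - (-1 : ℤ) ^ k * ((p - 1).choose k : ℕ)) : ℤ) : ℚ)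
            = 1 - (-1 : ℚ) ^ k * (((p - 1).choose k : ℕ) : ℚ) by push_cast; ring] at this
      calc padicNorm p (1 - (-1 : ℚ) ^ k * (((p - 1).choose k : ℕ) : ℚ)) * padicNorm p (bernoulli k)
          ≤ (p : ℚ)⁻¹ * 1 := mul_le_mul hz hb (padicNorm.nonneg _) (by positivity)
        _ = (p : ℚ)⁻¹ := by ring
    · rw [padicNorm.padicNorm_p hp.one_lt]
  refine ⟨(S + 1) / p, ?_, ?_⟩
  · apply den_not_dvd_of_padicNorm_le
    calc padicNorm p ((S + 1) / p) = padicNorm p (S + 1) / padicNorm p (p : ℚ) :=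
          padicNorm.div _ _
      _ = padicNorm p (S + 1) * p := by
          rw [padicNorm.padicNorm_p hp.one_lt, div_eq_mul_inv, inv_inv]
      _ ≤ (p : ℚ)⁻¹ * p := by
          apply mul_le_mul_of_nonneg_right hnorm (le_of_lt hppos)
      _ = 1 := by field_simp
  · field_simp
end
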